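/- arXiv:math/0605222 — 7 statements merged into one kernel-verified Lean document; each statement's English description precedes it below -/
import Mathlib

section
/- For any full-rank lattice Γ in ℝ^d, the set OC(Γ) = {R ∈ O(d) : Γ and RΓ are commensurate} is a subgroup of O(d). -/
/-- The standard hypercubic lattice `ℤ^d` inside `ℝ^d`. -/
def Zd (d : ℕ) : AddSubgroup (Fin d → ℝ) :=
  AddSubgroup.pi Set.univ fun _ => AddSubgroup.zmultiples (1 : ℝ)

/-- The dual lattice `Γ* = {x | ⟨x,y⟩ ∈ ℤ for all y ∈ Γ}`. -/
def dualLattice {d : ℕ} (Γ : AddSubgroup (Fin d → ℝ)) : AddSubgroup (Fin d → ℝ) where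
  carrier := {x | ∀ y ∈ Γ, ∃ n : ℤ, dotProduct x y = (n : ℝ)}
  zero_mem' := by
    intro y _
    exact ⟨0, by simp⟩
  add_mem' := by
    intro a b ha hb y hy
    obtain ⟨n, hn⟩ := ha y hy
    obtain ⟨m, hm⟩ := hb y hy
    exact ⟨n + m, by rw [add_dotProduct, hn, hm]; push_cast; ring⟩
  neg_mem' := by
    intro a ha y hy
    obtain ⟨n, hn⟩ := ha y hy
    exact ⟨-n, by rw [neg_dotProduct, hn]; push_cast; ring⟩

/-- `Γ` is a (full-rank) lattice in `ℝ^d`: the `ℤ`-span of an `ℝ`-basis. -/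
def IsLattice {d : ℕ} (Γ : AddSubgroup (Fin d → ℝ)) : Prop :=
  ∃ b : Module.Basis (Fin d) ℝ (Fin d → ℝ), Γ = (Submodule.span ℤ (Set.range ⇑b)).toAddSubgroup

/-- Two lattices are commensurate if their intersection has finite index in both. -/
def Commensurate {d : ℕ} (Γ₁ Γ₂ : AddSubgroup (Fin d → ℝ)) : Prop :=
  (Γ₁ ⊓ Γ₂).relIndex Γ₁ ≠ 0 ∧ (Γ₁ ⊓ Γ₂).relIndex Γ₂ ≠ 0

/-- The image `RΓ` of a lattice under a matrix `R`. -/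
def latmap {d : ℕ} (R : Matrix (Fin d) (Fin d) ℝ) (Γ : AddSubgroup (Fin d → ℝ)) :
    AddSubgroup (Fin d → ℝ) :=
  Γ.map R.mulVecLin.toAddMonoidHom

/-! Commensurability is an equivalence relation, and it is transported by every invertible
linear map. Hence `Γ ~ RΓ` and `Γ ~ SΓ` give `Γ ~ RΓ ~ RSΓ`, and applying `R⁻¹` to `Γ ~ RΓ`
gives `R⁻¹Γ ~ Γ`. -/

section

variable {d : ℕ}

theorem commensurate_iff_relIndex_ne_zero {H K : AddSubgroup (Fin d → ℝ)} :
    Commensurate H K ↔ K.relIndex H ≠ 0 ∧ H.relIndex K ≠ 0 := by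
  rw [Commensurate, AddSubgroup.inf_relIndex_left, AddSubgroup.inf_relIndex_right]

theorem Commensurate.refl (H : AddSubgroup (Fin d → ℝ)) : Commensurate H H := by
  simp [commensurate_iff_relIndex_ne_zero, AddSubgroup.relIndex_self]

theorem Commensurate.symm {H K : AddSubgroup (Fin d → ℝ)} (h : Commensurate H K) :
    Commensurate K H :=
  commensurate_iff_relIndex_ne_zero.2 (commensurate_iff_relIndex_ne_zero.1 h).symm

theorem Commensurate.trans {H K L : AddSubgroup (Fin d → ℝ)} (hHK : Commensurate H K)
    (hKL : Commensurate K L) : Commensurate H L := by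
  rw [commensurate_iff_relIndex_ne_zero] at hHK hKL ⊢
  exact ⟨AddSubgroup.relIndex_ne_zero_trans hKL.1 hHK.1,
    AddSubgroup.relIndex_ne_zero_trans hHK.2 hKL.2⟩

theorem Commensurate.map_of_injective {H K : AddSubgroup (Fin d → ℝ)}
    {f : (Fin d → ℝ) →+ (Fin d → ℝ)} (hf : Function.Injective f) (h : Commensurate H K) :
    Commensurate (H.map f) (K.map f) := by
  rw [commensurate_iff_relIndex_ne_zero] at h ⊢
  rwa [AddSubgroup.relIndex_map_map_of_injective _ _ hf,
    AddSubgroup.relIndex_map_map_of_injective _ _ hf]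

theorem latmap_one (Γ : AddSubgroup (Fin d → ℝ)) : latmap 1 Γ = Γ := by
  ext x
  simp [latmap]

theorem latmap_mul (A B : Matrix (Fin d) (Fin d) ℝ) (Γ : AddSubgroup (Fin d → ℝ)) :
    latmap (A * B) Γ = latmap A (latmap B Γ) := by
  rw [latmap, latmap, latmap, AddSubgroup.map_map]
  congr 1
  ext x
  simp [Matrix.mulVecLin_mul]

theorem Commensurate.latmap {A : Matrix (Fin d) (Fin d) ℝ} (hA : IsUnit A)
    {H K : AddSubgroup (Fin d → ℝ)} (h : Commensurate H K) :
    Commensurate (latmap A H) (latmap A K) :=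
  h.map_of_injective (Matrix.mulVec_injective_iff_isUnit.2 hA)

def coincidenceIsometries (Γ : AddSubgroup (Fin d → ℝ)) :
    Subgroup (Matrix.orthogonalGroup (Fin d) ℝ) where
  carrier := {R | Commensurate Γ (latmap (R : Matrix (Fin d) (Fin d) ℝ) Γ)}
  one_mem' := by
    simpa only [Set.mem_ofPred_eq, OneMemClass.coe_one, latmap_one] using Commensurate.refl Γ
  mul_mem' {A B} hA hB := by
    simp only [Set.mem_ofPred_eq, Submonoid.coe_mul, latmap_mul] at hA hB ⊢
    exact hA.trans (hB.latmap Unitary.isUnit_coe)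
  inv_mem' {A} hA := by
    have h := hA.latmap (Unitary.isUnit_coe (U := A⁻¹))
    rw [← latmap_mul, ← Submonoid.coe_mul, inv_mul_cancel, OneMemClass.coe_one,
      latmap_one] at h
    exact h.symm

end

theorem stmt5_general {d : ℕ} (Γ : AddSubgroup (Fin d → ℝ)) :
    ∃ S : Subgroup ↥(Matrix.orthogonalGroup (Fin d) ℝ),
      ∀ R : ↥(Matrix.orthogonalGroup (Fin d) ℝ),
        R ∈ S ↔ Commensurate Γ (latmap (R : Matrix (Fin d) (Fin d) ℝ) Γ) :=
  ⟨coincidenceIsometries Γ, fun _ => Iff.rfl⟩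

/-- For a full-rank lattice `Γ` in `ℝ^d`, the set `OC(Γ)` of coincidence isometries
forms a subgroup of `O(d)`. -/
theorem stmt5 {d : ℕ} (Γ : AddSubgroup (Fin d → ℝ)) (hΓ : IsLattice Γ) :
    ∃ S : Subgroup ↥(Matrix.orthogonalGroup (Fin d) ℝ),
      ∀ R : ↥(Matrix.orthogonalGroup (Fin d) ℝ),
        R ∈ S ↔ Commensurate Γ (latmap (R : Matrix (Fin d) (Fin d) ℝ) Γ) :=
  stmt5_general Γ
end

section
/- If Γ₂ is a sublattice of Γ₁ of finite index m, then OC(Γ₂) = OC(Γ₁), and for any R in this group the index Σ₁(R) = [Γ₁ : Γ₁ ∩ RΓ₁] divides m·Σ₂(R) where Σ₂(R) = [Γ₂ : Γ₂ ∩ RΓ₂]. -/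
/-! Write `H^f = H ⊓ f(H)` for an injective endomorphism `f`. Since `H ≤ K`, the tower
`H^f ≤ H ≤ K` gives `[K : H^f] = [H : H^f] · [K : H]`, while `H^f ≤ K^f` makes `[K : K^f]`
a divisor of `[K : H^f]`. Conversely, when `[K : K^f]` is finite, `f(H)` has finite index
`[f K : f H] · [K : f K] = [K : H] · [K : K^f]` in `K`, hence so does `H^f`. -/

namespace AddSubgroup

variable {G : Type*} [AddGroup G] {H K : AddSubgroup G}

theorem relIndex_inf_map_dvd_mul (f : G →+ G) (hHK : H ≤ K) :
    (K ⊓ K.map f).relIndex K ∣ (H ⊓ H.map f).relIndex H * H.relIndex K := by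
  rw [relIndex_mul_relIndex _ H K inf_le_left hHK]
  exact relIndex_dvd_of_le_left K (inf_le_inf hHK (map_mono hHK))

theorem relIndex_inf_map_ne_zero_iff {f : G →+ G} (hf : Function.Injective f) (hHK : H ≤ K)
    (hfin : H.relIndex K ≠ 0) :
    (K ⊓ K.map f).relIndex K ≠ 0 ↔ (H ⊓ H.map f).relIndex H ≠ 0 := by
  constructor
  · intro hK
    have hfHK : (H.map f).relIndex K ≠ 0 := by
      refine relIndex_ne_zero_trans ?_ (inf_relIndex_left K (K.map f) ▸ hK)
      rwa [relIndex_map_map_of_injective H K hf]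
    have hHfK : (H ⊓ H.map f).relIndex K ≠ 0 := relIndex_inf_ne_zero hfin hfHK
    rw [← relIndex_mul_relIndex _ H K inf_le_left hHK] at hHfK
    exact left_ne_zero_of_mul hHfK
  · intro hH
    exact ne_zero_of_dvd_ne_zero (mul_ne_zero hH hfin) (relIndex_inf_map_dvd_mul f hHK)

end AddSubgroup

theorem Matrix.mulVec_injective_of_mem_orthogonalGroup {n : Type*} [Fintype n] [DecidableEq n]
    (R : Matrix.orthogonalGroup n ℝ) : Function.Injective (R : Matrix n n ℝ).mulVec :=
  Matrix.mulVec_injective_iff_isUnit.2 Unitary.isUnit_coe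

theorem stmt7_general {d : ℕ} (Γ₁ Γ₂ : AddSubgroup (Fin d → ℝ))
    (hle : Γ₂ ≤ Γ₁) (m : ℕ) (hm : Γ₂.relIndex Γ₁ = m) (h0 : m ≠ 0) :
    (∀ R : ↥(Matrix.orthogonalGroup (Fin d) ℝ),
      ((Γ₁ ⊓ latmap (R : Matrix (Fin d) (Fin d) ℝ) Γ₁).relIndex Γ₁ ≠ 0 ↔
       (Γ₂ ⊓ latmap (R : Matrix (Fin d) (Fin d) ℝ) Γ₂).relIndex Γ₂ ≠ 0)) ∧
    (∀ R : ↥(Matrix.orthogonalGroup (Fin d) ℝ),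
      (Γ₁ ⊓ latmap (R : Matrix (Fin d) (Fin d) ℝ) Γ₁).relIndex Γ₁ ≠ 0 →
      (Γ₁ ⊓ latmap (R : Matrix (Fin d) (Fin d) ℝ) Γ₁).relIndex Γ₁ ∣
        m * (Γ₂ ⊓ latmap (R : Matrix (Fin d) (Fin d) ℝ) Γ₂).relIndex Γ₂) := by
  subst hm
  refine ⟨fun R => ?_, fun R _ => ?_⟩
  · exact AddSubgroup.relIndex_inf_map_ne_zero_iff
      (Matrix.mulVec_injective_of_mem_orthogonalGroup R) hle h0
  · rw [mul_comm]
    exact AddSubgroup.relIndex_inf_map_dvd_mul _ hle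

/-- If `Γ₂` is a sublattice of `Γ₁` of finite index `m`, then `OC(Γ₂) = OC(Γ₁)` and for any
`R` in this group, `Σ₁(R)` divides `m · Σ₂(R)`. -/
theorem stmt7 {d : ℕ} (Γ₁ Γ₂ : AddSubgroup (Fin d → ℝ)) (h1 : IsLattice Γ₁)
    (hle : Γ₂ ≤ Γ₁) (m : ℕ) (hm : Γ₂.relIndex Γ₁ = m) (h0 : m ≠ 0) :
    (∀ R : ↥(Matrix.orthogonalGroup (Fin d) ℝ),
      ((Γ₁ ⊓ latmap (R : Matrix (Fin d) (Fin d) ℝ) Γ₁).relIndex Γ₁ ≠ 0 ↔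
       (Γ₂ ⊓ latmap (R : Matrix (Fin d) (Fin d) ℝ) Γ₂).relIndex Γ₂ ≠ 0)) ∧
    (∀ R : ↥(Matrix.orthogonalGroup (Fin d) ℝ),
      (Γ₁ ⊓ latmap (R : Matrix (Fin d) (Fin d) ℝ) Γ₁).relIndex Γ₁ ≠ 0 →
      (Γ₁ ⊓ latmap (R : Matrix (Fin d) (Fin d) ℝ) Γ₁).relIndex Γ₁ ∣
        m * (Γ₂ ⊓ latmap (R : Matrix (Fin d) (Fin d) ℝ) Γ₂).relIndex Γ₂) :=
  stmt7_general Γ₁ Γ₂ hle m hm h0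
end

section
/- An orthogonal transformation R ∈ O(d) is a coincidence isometry of ℤ^d if and only if the matrix of R has all rational entries; that is, OC(ℤ^d) = O(d, ℚ). -/
/-!
If `n` is the (finite) index of `ℤ^d ∩ Rℤ^d` in `ℤ^d`, then `n eᵢ ∈ Rℤ^d`, so
`Rᵀ (n eᵢ) = n · (row i of R)` is integral and `R` has rational entries. Conversely, if `N ≠ 0`
clears the denominators of `R`, then `Rᵀ = R⁻¹` maps `N ℤ^d` into `ℤ^d`, hence
`N ℤ^d ⊆ ℤ^d ∩ Rℤ^d`, and `N ℤ^d` has index `|N|^d` in `ℤ^d`.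
-/

open Matrix

lemma exists_ne_zero_int_mul_eq_int_iff {ι : Type*} [Finite ι] {f : ι → ℝ} :
    (∃ N : ℤ, N ≠ 0 ∧ ∀ i, ∃ m : ℤ, N * f i = m) ↔ ∀ i, ∃ q : ℚ, f i = q := by
  constructor
  · rintro ⟨N, hN, hf⟩ i
    obtain ⟨m, hm⟩ := hf i
    refine ⟨m / N, ?_⟩
    push_cast
    rw [← hm]
    field_simp
  · intro hf
    choose q hq using hf
    obtain ⟨b, hb⟩ := IsLocalization.exist_integer_multiples_of_finite (nonZeroDivisors ℤ) q
    refine ⟨b, nonZeroDivisors.coe_ne_zero b, fun i => ?_⟩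
    obtain ⟨m, hm⟩ := hb i
    refine ⟨m, ?_⟩
    rw [hq i]
    exact_mod_cast congrArg (Rat.cast : ℚ → ℝ) hm.symm

lemma mem_Zd_iff {d : ℕ} {x : Fin d → ℝ} : x ∈ Zd d ↔ ∀ i, ∃ n : ℤ, x i = n := by
  simp [Zd, AddSubgroup.mem_pi, AddSubgroup.mem_zmultiples_iff, eq_comm]

lemma Zd_eq_range (d : ℕ) : Zd d = (AddMonoidHom.compLeft (Int.castAddHom ℝ) (Fin d)).range := by
  ext x
  simp [mem_Zd_iff, funext_iff, Classical.skolem, eq_comm]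

lemma mulVec_mem_Zd {m d : ℕ} {A : Matrix (Fin m) (Fin d) ℝ} (hA : ∀ i j, ∃ a : ℤ, A i j = a)
    {x : Fin d → ℝ} (hx : x ∈ Zd d) : A *ᵥ x ∈ Zd m := by
  choose a ha using hA
  choose n hn using mem_Zd_iff.1 hx
  exact mem_Zd_iff.2 fun i => ⟨∑ j, a i j * n j, by simp [mulVec, dotProduct, ha, hn]⟩

lemma mem_latmap_iff_transpose_mulVec_mem {d : ℕ} {R : Matrix (Fin d) (Fin d) ℝ}
    (hR : R ∈ orthogonalGroup (Fin d) ℝ) {Γ : AddSubgroup (Fin d → ℝ)} {y : Fin d → ℝ} :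
    y ∈ latmap R Γ ↔ Rᵀ *ᵥ y ∈ Γ := by
  constructor
  · rintro ⟨x, hx, rfl⟩
    change Rᵀ *ᵥ R *ᵥ x ∈ Γ
    rwa [mulVec_mulVec, (mem_orthogonalGroup_iff' _ _).mp hR, one_mulVec]
  · intro h
    refine ⟨_, h, ?_⟩
    change R *ᵥ Rᵀ *ᵥ y = y
    rw [mulVec_mulVec, (mem_orthogonalGroup_iff _ _).mp hR, one_mulVec]

lemma relIndex_Zd_ne_zero_of_zsmul_mem {d : ℕ} {H : AddSubgroup (Fin d → ℝ)} {N : ℤ}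
    (hN : N ≠ 0) (hH : ∀ x ∈ Zd d, N • x ∈ H) : H.relIndex (Zd d) ≠ 0 := by
  set ι := AddMonoidHom.compLeft (Int.castAddHom ℝ) (Fin d)
  rw [Zd_eq_range, ← AddSubgroup.index_comap]
  have hle : AddSubgroup.pi Set.univ (fun _ => AddSubgroup.zmultiples N) ≤ H.comap ι := by
    intro x hx
    choose k hk using fun i => AddSubgroup.mem_zmultiples_iff.1 (hx i trivial)
    have hx_eq : x = N • k := by ext i; simp [← hk i, mul_comm]
    rw [hx_eq, AddSubgroup.mem_comap, map_zsmul]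
    exact hH _ (Zd_eq_range d ▸ AddMonoidHom.mem_range.2 ⟨k, rfl⟩)
  intro h0
  have hdvd := AddSubgroup.index_dvd_of_le hle
  rw [h0, AddSubgroup.index_pi, zero_dvd_iff, Finset.prod_eq_zero_iff] at hdvd
  simp [Int.index_zmultiples, hN] at hdvd

lemma exists_int_eq_relIndex_mul_apply {d : ℕ} {R : Matrix (Fin d) (Fin d) ℝ}
    (hR : R ∈ orthogonalGroup (Fin d) ℝ) (i j : Fin d) :
    ∃ m : ℤ, ((Zd d ⊓ latmap R (Zd d)).relIndex (Zd d) : ℝ) * R i j = m := by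
  have hsingle : Pi.single i (1 : ℝ) ∈ Zd d :=
    mem_Zd_iff.2 fun k =>
      ⟨(Pi.single i 1 : Fin d → ℤ) k, by rcases eq_or_ne k i with rfl | h <;> simp [*]⟩
  have hmem := (AddSubgroup.nsmul_relIndex_mem (Zd d ⊓ latmap R (Zd d)) hsingle).2
  obtain ⟨m, hm⟩ := mem_Zd_iff.1 ((mem_latmap_iff_transpose_mulVec_mem hR).1 hmem) j
  rw [mulVec_smul, mulVec_single_one, Pi.smul_apply, col_apply, transpose_apply,
    nsmul_eq_mul] at hm
  exact ⟨m, hm⟩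

theorem relIndex_inf_latmap_ne_zero_iff {d : ℕ} {R : Matrix (Fin d) (Fin d) ℝ}
    (hR : R ∈ orthogonalGroup (Fin d) ℝ) :
    (Zd d ⊓ latmap R (Zd d)).relIndex (Zd d) ≠ 0 ↔
      ∃ N : ℤ, N ≠ 0 ∧ ∀ i j, ∃ m : ℤ, N * R i j = m := by
  constructor
  · intro h
    exact ⟨_, Int.natCast_ne_zero.2 h, by exact_mod_cast exists_int_eq_relIndex_mul_apply hR⟩
  · rintro ⟨N, hN, hNR⟩
    refine relIndex_Zd_ne_zero_of_zsmul_mem hN fun x hx =>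
      ⟨zsmul_mem hx N, (mem_latmap_iff_transpose_mulVec_mem hR).2 ?_⟩
    rw [mulVec_smul, ← smul_mulVec]
    exact mulVec_mem_Zd (fun i j => by simpa [mul_comm] using hNR j i) hx

/-- `R ∈ O(d)` is a coincidence isometry of `ℤ^d` iff all entries of `R` are rational:
`OC(ℤ^d) = O(d,ℚ)`. -/
theorem stmt9 {d : ℕ} (R : Matrix (Fin d) (Fin d) ℝ)
    (hR : R ∈ Matrix.orthogonalGroup (Fin d) ℝ) :
    (Zd d ⊓ latmap R (Zd d)).relIndex (Zd d) ≠ 0 ↔ ∀ i j, ∃ q : ℚ, R i j = (q : ℝ) := by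
  rw [relIndex_inf_latmap_ne_zero_iff hR]
  simpa only [Prod.forall] using
    exists_ne_zero_int_mul_eq_int_iff (f := fun p : Fin d × Fin d => R p.1 p.2)
end

section
/- Every coincidence rotation of the square lattice, i.e. every z ∈ ℚ(i) with |z| = 1, can be written as z = α/ᾱ times a power of i, for some Gaussian integer α whose prime factors all lie above rational primes p ≡ 1 (mod 4); equivalently, z is a power of i times a finite product of factors (ω_p/ω̄_p)^{n_p} over primes p ≡ 1 (mod 4), where p = ω_p ω̄_p in ℤ[i]. -/
/-!
By Hilbert's Theorem 90 a unimodular `z ∈ ℚ(i)` satisfies `z * ᾱ = α` for a nonzero Gaussian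
integer `α`: take `α = d * (z + 1)` with `d` clearing denominators (or `α = i` when `z = -1`).
A Gaussian prime `q` over `2` or over a rational prime `p ≡ 3 (mod 4)` is associated to its
conjugate, so cancelling it from `α` only changes the equation by a unit factor. Descending along
divisibility removes all such primes, and the units of `ℤ[i]` are the powers of `i`.
-/

open GaussianInt Complex
open scoped ComplexConjugate

theorem Prime.exists_nat_prime_dvd_of_dvd_natCast {R : Type*} [CommSemiring R] {q : R}
    (hq : Prime q) {n : ℕ} (hn : n ≠ 0) (h : q ∣ (n : R)) : ∃ p : ℕ, p.Prime ∧ q ∣ (p : R) := by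
  rw [← Nat.prod_primeFactorsList hn, Nat.cast_list_prod, hq.dvd_prod_iff] at h
  obtain ⟨_, hmem, hdvd⟩ := h
  obtain ⟨p, hp, rfl⟩ := List.mem_map.1 hmem
  exact ⟨p, Nat.prime_of_mem_primeFactorsList hp, hdvd⟩

theorem Zsqrtd.irreducible_of_prime_natAbs_norm {d : ℤ} {x : ℤ√d} (hx : x.norm.natAbs.Prime) :
    Irreducible x := by
  refine ⟨fun hu => hx.ne_one (Zsqrtd.norm_eq_one_iff.2 hu), fun a b hab => ?_⟩
  rw [hab, Zsqrtd.norm_mul, Int.natAbs_mul, Nat.prime_mul_iff] at hx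
  rcases hx with ⟨-, hb⟩ | ⟨-, ha⟩
  · exact Or.inr (Zsqrtd.norm_eq_one_iff.1 hb)
  · exact Or.inl (Zsqrtd.norm_eq_one_iff.1 ha)

theorem associated_star_of_associated {R : Type*} [CommSemiring R] [StarRing R] {q π : R}
    (h : Associated q π) (hπ : Associated π (star π)) : Associated q (star q) :=
  (h.trans hπ).trans (h.map (starRingEnd R)).symm

namespace GaussianInt

def LiesOverOneModFour (q : GaussianInt) : Prop :=
  ∃ p : ℕ, p.Prime ∧ p % 4 = 1 ∧ q ∣ (p : GaussianInt)

theorem exists_toComplex_eq_I_pow_of_isUnit {u : GaussianInt} (hu : IsUnit u) :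
    ∃ m : ℕ, (u : ℂ) = I ^ m := by
  obtain ⟨x, y⟩ := u
  have hnorm : x * x + y * y = 1 := by
    simpa [Zsqrtd.norm] using (Zsqrtd.norm_eq_one_iff' (by norm_num) _).2 hu
  obtain ⟨hx1, hx2⟩ : -1 ≤ x ∧ x ≤ 1 := by constructor <;> nlinarith
  obtain ⟨hy1, hy2⟩ : -1 ≤ y ∧ y ≤ 1 := by constructor <;> nlinarith
  interval_cases x <;> interval_cases y <;> simp at hnorm
  · exact ⟨2, by simp [toComplex_def']⟩
  · exact ⟨3, by simp [toComplex_def', pow_succ]⟩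
  · exact ⟨1, by simp [toComplex_def']⟩
  · exact ⟨0, by simp [toComplex_def']⟩

theorem exists_nat_prime_dvd {q : GaussianInt} (hq : Prime q) :
    ∃ p : ℕ, p.Prime ∧ q ∣ (p : GaussianInt) := by
  refine hq.exists_nat_prime_dvd_of_dvd_natCast (n := q.norm.natAbs) ?_ ?_
  · simpa using hq.ne_zero
  · rw [natCast_natAbs_norm, Zsqrtd.norm_eq_mul_conj]
    exact dvd_mul_right q _

theorem prime_one_add_I : Prime (⟨1, 1⟩ : GaussianInt) :=
  (Zsqrtd.irreducible_of_prime_natAbs_norm (by decide)).prime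

theorem associated_star_of_dvd_natCast {q : GaussianInt} (hq : Prime q) {p : ℕ} (hp : p.Prime)
    (hp4 : p % 4 ≠ 1) (hqp : q ∣ (p : GaussianInt)) : Associated q (star q) := by
  rcases hp.eq_two_or_odd' with rfl | hodd
  · have hstar : Associated (⟨1, 1⟩ : GaussianInt) (star ⟨1, 1⟩) :=
      ⟨⟨⟨0, -1⟩, ⟨0, 1⟩, by decide, by decide⟩, by decide⟩
    have h2 : ((2 : ℕ) : GaussianInt) = ⟨1, 1⟩ * star ⟨1, 1⟩ := by decide
    rw [h2] at hqp
    have h : q ∣ ⟨1, 1⟩ := (hq.dvd_or_dvd hqp).elim id (·.trans hstar.symm.dvd)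
    exact associated_star_of_associated (hq.associated_of_dvd prime_one_add_I h) hstar
  · have : Fact p.Prime := ⟨hp⟩
    have hpp : Prime (p : GaussianInt) :=
      (prime_iff_mod_four_eq_three_of_nat_prime p).2 (by have := Nat.odd_iff.1 hodd; omega)
    exact associated_star_of_associated (hq.associated_of_dvd hpp hqp) (by simp)

theorem associated_star_of_not_liesOverOneModFour {q : GaussianInt} (hq : Prime q)
    (h : ¬LiesOverOneModFour q) : Associated q (star q) := by
  obtain ⟨p, hp, hqp⟩ := exists_nat_prime_dvd hq
  exact associated_star_of_dvd_natCast hq hp (fun hp4 => h ⟨p, hp, hp4, hqp⟩) hqp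

theorem exists_liesOverOneModFour_mul_star_eq (z : ℂ) {α : GaussianInt} (hα : α ≠ 0)
    (w : GaussianIntˣ) (h : z * (star α : GaussianInt) = (w : GaussianInt) * α) :
    ∃ (v : GaussianIntˣ) (β : GaussianInt), β ≠ 0 ∧
      (∀ q : GaussianInt, Prime q → q ∣ β → LiesOverOneModFour q) ∧
      z * (star β : GaussianInt) = (v : GaussianInt) * β := by
  induction α using (wellFounded_dvdNotUnit (α := GaussianInt)).induction generalizing w with
  | h α ih =>
  by_cases hgood : ∀ q : GaussianInt, Prime q → q ∣ α → LiesOverOneModFour q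
  · exact ⟨w, α, hα, hgood, h⟩
  push Not at hgood
  obtain ⟨q, hq, ⟨β, rfl⟩, hbad⟩ := hgood
  obtain ⟨u, hu⟩ := associated_star_of_not_liesOverOneModFour hq hbad
  have hβ : β ≠ 0 := right_ne_zero_of_mul hα
  refine ih β ⟨hβ, q, hq.not_isUnit, mul_comm q β⟩ hβ (w * u⁻¹) ?_
  have hq0 : (q : ℂ) ≠ 0 := toComplex_eq_zero.not.2 hq.ne_zero
  have hstar : ((star q : GaussianInt) : ℂ) = q * u := by rw [← hu, map_mul]
  have hunit : (u : ℂ) * ↑u⁻¹ = 1 := by rw [← map_mul, u.mul_inv, map_one]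
  rw [star_mul', map_mul, hstar, map_mul] at h
  apply mul_left_cancel₀ hq0
  rw [Units.val_mul, map_mul]
  linear_combination (toComplex ↑u⁻¹) * h - z * q * (star β : GaussianInt) * hunit

theorem exists_ne_zero_mul_star_eq (a b : ℚ) {z : ℂ} (hz : z = a + b * I) (habs : ‖z‖ = 1) :
    ∃ α : GaussianInt, α ≠ 0 ∧ z * (star α : GaussianInt) = α := by
  by_cases hz1 : z = -1
  · exact ⟨⟨0, 1⟩, by decide, by simp [hz1, toComplex_def']⟩
  set d : ℕ := a.den * b.den
  have hd : (d : ℂ) ≠ 0 := by simp [d, a.den_nz, b.den_nz]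
  have hzz : z * conj z = 1 := by
    rw [mul_conj, normSq_eq_norm_sq, habs]; norm_num
  have ha : (a.num : ℂ) = a * a.den := by rw [Rat.cast_def]; field_simp
  have hb : (b.num : ℂ) = b * b.den := by rw [Rat.cast_def]; field_simp
  set α : GaussianInt := ⟨a.num * b.den + d, b.num * a.den⟩
  have hα : (α : ℂ) = d * (z + 1) := by
    rw [toComplex_def', hz]
    push_cast [d]
    linear_combination (b.den : ℂ) * ha + (a.den * I : ℂ) * hb
  refine ⟨α, fun h => ?_, ?_⟩
  · rw [← toComplex_eq_zero, hα] at h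
    exact hz1 (eq_neg_of_add_eq_zero_left ((mul_eq_zero.1 h).resolve_left hd))
  · rw [toComplex_star, hα, map_mul, map_add, conj_natCast, map_one]
    linear_combination (d : ℂ) * hzz

end GaussianInt

/-- Every coincidence rotation of the square lattice, i.e. every `z ∈ ℚ(i)` with `|z| = 1`,
is a power of `i` times `α/ᾱ` for some Gaussian integer `α ≠ 0` all of whose prime factors
lie above rational primes `p ≡ 1 (mod 4)`. -/
theorem stmt11 (a b : ℚ) (z : ℂ) (hz : z = (a : ℂ) + (b : ℂ) * Complex.I)
    (habs : ‖z‖ = 1) :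
    ∃ (k : ℕ) (α : GaussianInt), α ≠ 0 ∧
      (∀ q : GaussianInt, Prime q → q ∣ α →
        ∃ p : ℕ, p.Prime ∧ p % 4 = 1 ∧ q ∣ (p : GaussianInt)) ∧
      z * GaussianInt.toComplex (star α) = Complex.I ^ k * GaussianInt.toComplex α := by
  obtain ⟨α, hα, hzα⟩ := exists_ne_zero_mul_star_eq a b hz habs
  obtain ⟨v, β, hβ, hsplit, hzβ⟩ :=
    exists_liesOverOneModFour_mul_star_eq z hα 1 (by rwa [Units.val_one, map_one, one_mul])
  obtain ⟨k, hk⟩ := exists_toComplex_eq_I_pow_of_isUnit v.isUnit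
  exact ⟨k, β, hβ, hsplit, hk ▸ hzβ⟩
end

section
/- For the square lattice ℤ², the coincidence index of a rotation z = α/β (α, β coprime Gaussian integers of equal norm) equals the norm N(α) = |α|², and it is always an odd integer all of whose prime factors are ≡ 1 (mod 4). -/
/-!
Clearing denominators, `γ ∈ ℤ[i]` lies in `(α/β)ℤ[i]` iff `α ∣ βγ`, i.e. iff `α ∣ γ` since `α` and
`β` are coprime; so the coincidence sublattice is the principal ideal `(α)`, whose index is the
norm `N(α)`. A prime `p ∣ N(α) = N(β)` with `p = 2` or `p ≡ 3 (mod 4)` would give a common non-unit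
divisor of `α` and `β`: `1 + i` in the first case, the inert prime `p` itself in the second.
-/

/-- The square lattice `ℤ² ≅ ℤ[i]`, realized as an additive subgroup of `ℂ`. -/
noncomputable def Zi : AddSubgroup ℂ := GaussianInt.toComplex.toAddMonoidHom.range

namespace Zsqrtd

variable {d : ℤ}

noncomputable def basis (d : ℤ) : Module.Basis (Fin 2) ℤ (ℤ√d) :=
  .ofEquivFun <| AddEquiv.toIntLinearEquiv
    { toFun x := ![x.re, x.im]
      invFun v := ⟨v 0, v 1⟩
      left_inv x := rfl
      right_inv v := by ext i; fin_cases i <;> rfl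
      map_add' x y := by ext i; fin_cases i <;> rfl }

@[simp] theorem basis_repr (x : ℤ√d) :
    (basis d).repr x = Finsupp.equivFunOnFinite.symm ![x.re, x.im] :=
  rfl

@[simp] theorem basis_zero : basis d 0 = 1 := by ext <;> simp [basis] <;> rfl
@[simp] theorem basis_one : basis d 1 = sqrtd := by ext <;> simp [basis] <;> rfl

instance : Module.Free ℤ (ℤ√d) := .of_basis (basis d)

instance : Module.Finite ℤ (ℤ√d) := .of_basis (basis d)

theorem algebra_norm_eq_norm (x : ℤ√d) : Algebra.norm ℤ x = x.norm := by
  rw [Algebra.norm_eq_matrix_det (basis d), Matrix.det_fin_two, norm_def]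
  simp [Algebra.leftMulMatrix_eq_repr_mul]

end Zsqrtd

namespace GaussianInt

open Zsqrtd

theorem index_span_singleton (α : GaussianInt) :
    (Ideal.span {α}).toAddSubgroup.index = α.norm.natAbs := by
  rw [← Ideal.absNorm_eq_index, Ideal.absNorm_span_singleton, algebra_norm_eq_norm]

theorem mk_one_one_dvd_of_two_dvd_norm {x : GaussianInt} (h : 2 ∣ x.norm) : ⟨1, 1⟩ ∣ x := by
  have hnorm : x.norm = x.re * x.re + x.im * x.im := by rw [norm_def]; ring
  obtain ⟨k, hk⟩ : Even (x.re + x.im) := by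
    have := even_iff_two_dvd.mpr (hnorm ▸ h)
    rwa [Int.even_add, Int.even_mul, Int.even_mul, or_self, or_self, ← Int.even_add] at this
  exact ⟨⟨k, x.im - k⟩, by ext <;> simp; omega⟩

theorem not_isUnit_mk_one_one : ¬IsUnit (⟨1, 1⟩ : GaussianInt) := by
  rw [← norm_eq_one_iff]
  decide

theorem natCast_dvd_of_dvd_norm {p : ℕ} [Fact p.Prime] (hp3 : p % 4 = 3) {x : GaussianInt}
    (h : (p : ℤ) ∣ x.norm) : (p : GaussianInt) ∣ x := by
  have : (p : GaussianInt) ∣ x * star x := by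
    rw [← norm_eq_mul_conj]; simpa using map_dvd (Int.castRingHom GaussianInt) h
  refine ((prime_of_nat_prime_of_mod_four_eq_three p hp3).dvd_or_dvd this).elim id fun h' ↦ ?_
  simpa [starRingEnd_apply] using map_dvd (starRingEnd GaussianInt) h'

theorem mod_four_eq_one_of_dvd_norm {α β : GaussianInt} (hco : IsCoprime α β)
    (hnorm : α.norm = β.norm) {p : ℕ} (hp : p.Prime) (hα : (p : ℤ) ∣ α.norm) : p % 4 = 1 := by
  have hβ : (p : ℤ) ∣ β.norm := hnorm ▸ hα
  rcases hp.eq_two_or_odd' with rfl | hodd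
  · exact absurd (hco.isUnit_of_dvd' (mk_one_one_dvd_of_two_dvd_norm hα)
      (mk_one_one_dvd_of_two_dvd_norm hβ)) not_isUnit_mk_one_one
  · have : Fact p.Prime := ⟨hp⟩
    have hp3 : p % 4 ≠ 3 := fun hp3 ↦ (prime_of_nat_prime_of_mod_four_eq_three p hp3).not_isUnit
      (hco.isUnit_of_dvd' (natCast_dvd_of_dvd_norm hp3 hα) (natCast_dvd_of_dvd_norm hp3 hβ))
    have := Nat.odd_iff.mp hodd
    omega

theorem Zi_inf_map_mulLeft_div_eq {α β : GaussianInt} (hco : IsCoprime α β) (hβ : β ≠ 0) :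
    Zi ⊓ Zi.map (AddMonoidHom.mulLeft ((α : ℂ) / β)) =
      (Ideal.span {α}).toAddSubgroup.map toComplex.toAddMonoidHom := by
  have hβ' : (β : ℂ) ≠ 0 := toComplex_eq_zero.not.mpr hβ
  ext w
  simp only [Zi, AddSubgroup.mem_inf, AddSubgroup.mem_map, AddMonoidHom.mem_range,
    AddMonoidHom.coe_mulLeft, Submodule.mem_toAddSubgroup, Ideal.mem_span_singleton,
    RingHom.toAddMonoidHom_eq_coe, AddMonoidHom.coe_coe]
  constructor
  · rintro ⟨⟨γ, rfl⟩, _, ⟨δ, rfl⟩, hδ⟩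
    have hγ : β * γ = α * δ := toComplex_injective <| by
      rw [toComplex_mul, toComplex_mul, ← hδ]
      field_simp
    exact ⟨γ, hco.dvd_of_dvd_mul_left ⟨δ, hγ⟩, rfl⟩
  · rintro ⟨_, ⟨c, rfl⟩, rfl⟩
    refine ⟨⟨α * c, rfl⟩, _, ⟨β * c, rfl⟩, ?_⟩
    rw [toComplex_mul, toComplex_mul]
    field_simp

end GaussianInt

/-- For the square lattice, the coincidence index of a rotation `z = α/β` (with `α, β` coprime
Gaussian integers of equal norm) equals `N(α) = |α|²`, and it is odd with all prime factors
`≡ 1 (mod 4)`. -/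
theorem stmt12 (α β : GaussianInt) (hco : IsCoprime α β) (hβ : β ≠ 0)
    (hnorm : α.norm = β.norm) (z : ℂ)
    (hz : z = GaussianInt.toComplex α / GaussianInt.toComplex β) :
    (Zi ⊓ Zi.map (AddMonoidHom.mulLeft z)).relIndex Zi = α.norm.natAbs ∧
    Odd α.norm.natAbs ∧
    (∀ p : ℕ, p.Prime → p ∣ α.norm.natAbs → p % 4 = 1) := by
  have hprime : ∀ p : ℕ, p.Prime → p ∣ α.norm.natAbs → p % 4 = 1 := fun p hp hdvd ↦
    GaussianInt.mod_four_eq_one_of_dvd_norm hco hnorm hp (Int.natCast_dvd.mpr hdvd)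
  refine ⟨?_, Nat.not_even_iff_odd.mp fun h ↦ absurd (hprime 2 Nat.prime_two h.two_dvd) (by decide),
    hprime⟩
  rw [hz, GaussianInt.Zi_inf_map_mulLeft_div_eq hco hβ, Zi, AddMonoidHom.range_eq_map,
    AddSubgroup.relIndex_map_map_of_injective _ _ GaussianInt.toComplex_injective,
    AddSubgroup.relIndex_top_right, GaussianInt.index_span_singleton]
end

section
/- For a primitive integer quaternion q = (κ,λ,μ,ν) (gcd 1), the coincidence index of the associated Cayley rotation R(q) ∈ SO(3,ℚ) on the lattice ℤ³ equals the denominator den(R(q)), which is the odd part |q|²/2^ℓ of the norm |q|² = κ²+λ²+μ²+ν², where 2^ℓ is the largest power of 2 dividing |q|². -/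
/-- Cayley's parametrization of a rotation by a quaternion `(κ,λ,μ,ν)`. -/
noncomputable def cayley (k l m n : ℤ) : Matrix (Fin 3) (Fin 3) ℝ :=
  ((k : ℝ)^2 + (l : ℝ)^2 + (m : ℝ)^2 + (n : ℝ)^2)⁻¹ •
  !![(k : ℝ)^2 + (l : ℝ)^2 - (m : ℝ)^2 - (n : ℝ)^2,
       -2*(k : ℝ)*(n : ℝ) + 2*(l : ℝ)*(m : ℝ), 2*(k : ℝ)*(m : ℝ) + 2*(l : ℝ)*(n : ℝ);
     2*(k : ℝ)*(n : ℝ) + 2*(l : ℝ)*(m : ℝ),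
       (k : ℝ)^2 - (l : ℝ)^2 + (m : ℝ)^2 - (n : ℝ)^2,
       -2*(k : ℝ)*(l : ℝ) + 2*(m : ℝ)*(n : ℝ);
     -2*(k : ℝ)*(m : ℝ) + 2*(l : ℝ)*(n : ℝ), 2*(k : ℝ)*(l : ℝ) + 2*(m : ℝ)*(n : ℝ),
       (k : ℝ)^2 - (l : ℝ)^2 - (m : ℝ)^2 + (n : ℝ)^2]


/-!
Write `R(q) = M / |q|²` with `M` the integer matrix `cayleyNum`. The rows of `M` have squared
length `|q|⁴`, so an iterated sum-of-three-squares argument shows that `2^ℓ` divides `M`; hence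
`R = B / D` with `D` the odd part of `|q|²` and `B Bᵀ = D²`. For an odd prime `p ∣ D` the identities
`4κ² = |q|² + M₀₀ + M₁₁ + M₂₂`, … show that `p` divides every entry of `B` only if it divides `q`,
so `D` is the denominator of `R`.

For the coincidence index, an integer vector `v` lies in `Rℤ³` iff `D ∣ vᵀB`, so `Σ(R)` is the
index of `{v | vᵀB ≡ 0 mod D}`. Since `R` preserves cross products, all `2 × 2` minors of `B` are
divisible by `D`. Modulo a prime power `p^a ∥ D` some entry of `B` is a unit, so the congruences
collapse to one surjective linear form and the index is `p^a`; the Chinese remainder theorem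
multiplies these to `D`.
-/

open Matrix

lemma AddSubgroup.index_inf_of_coprime {G : Type*} [AddGroup G] {H K : AddSubgroup G}
    (hH : H.index ≠ 0) (hK : K.index ≠ 0) (hHK : H.index.Coprime K.index) :
    (H ⊓ K).index = H.index * K.index :=
  le_antisymm AddSubgroup.index_inf_le <| Nat.le_of_dvd
    (Nat.pos_of_ne_zero (AddSubgroup.index_inf_ne_zero hH hK))
    (hHK.mul_dvd_of_dvd_of_dvd (AddSubgroup.index_dvd_of_le inf_le_left)
      (AddSubgroup.index_dvd_of_le inf_le_right))

namespace CayleyCoincidence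

def intVec (d : ℕ) : (Fin d → ℤ) →+ (Fin d → ℝ) := (Int.castAddHom ℝ).compLeft (Fin d)

@[simp] lemma intVec_apply {d : ℕ} (v : Fin d → ℤ) (i : Fin d) : intVec d v i = v i := rfl

lemma Zd_eq_range (d : ℕ) : Zd d = (intVec d).range := by
  ext x
  simp only [Zd, AddSubgroup.mem_pi, Set.mem_univ, true_implies,
    AddSubgroup.mem_zmultiples_iff, zsmul_eq_mul, mul_one, AddMonoidHom.mem_range, funext_iff,
    intVec_apply]
  rw [Classical.skolem]

lemma relIndex_Zd_eq_index_comap {d : ℕ} (H : AddSubgroup (Fin d → ℝ)) :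
    (Zd d ⊓ H).relIndex (Zd d) = (H.comap (intVec d)).index := by
  rw [AddSubgroup.inf_relIndex_left, AddSubgroup.index_comap, Zd_eq_range]

lemma mem_latmap_iff {d : ℕ} {R S : Matrix (Fin d) (Fin d) ℝ} (hSR : S * R = 1) (hRS : R * S = 1)
    (Γ : AddSubgroup (Fin d → ℝ)) (x : Fin d → ℝ) : x ∈ latmap R Γ ↔ S *ᵥ x ∈ Γ := by
  refine ⟨?_, fun hx => ⟨S *ᵥ x, hx, by simp [mulVec_mulVec, hRS]⟩⟩
  rintro ⟨y, hy, rfl⟩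
  simpa [mulVec_mulVec, hSR] using hy

lemma exists_intCast_eq_inv_mul_iff {D : ℕ} (hD : D ≠ 0) (w : ℤ) :
    (∃ z : ℤ, (z : ℝ) = (D : ℝ)⁻¹ * w) ↔ (D : ℤ) ∣ w := by
  have hDR : (D : ℝ) ≠ 0 := by exact_mod_cast hD
  constructor
  · rintro ⟨z, hz⟩
    refine ⟨z, ?_⟩
    have : (w : ℝ) = D * z := by rw [hz]; field_simp
    exact_mod_cast this
  · rintro ⟨z, rfl⟩
    exact ⟨z, by push_cast; field_simp⟩

lemma inv_smul_intVec_mem_Zd_iff {d D : ℕ} (hD : D ≠ 0) (w : Fin d → ℤ) :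
    (D : ℝ)⁻¹ • intVec d w ∈ Zd d ↔ ∀ i, (D : ℤ) ∣ w i := by
  simp only [Zd_eq_range, AddMonoidHom.mem_range, funext_iff, intVec_apply, Pi.smul_apply,
    smul_eq_mul, ← exists_intCast_eq_inv_mul_iff hD]
  rw [Classical.skolem]

def congrLattice {m n : Type*} [Fintype m] (B : Matrix m n ℤ) (e : ℕ) : AddSubgroup (m → ℤ) where
  carrier := {v | ∀ j, (e : ℤ) ∣ (v ᵥ* B) j}
  add_mem' ha hb j := by rw [add_vecMul]; exact dvd_add (ha j) (hb j)
  zero_mem' j := by simp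
  neg_mem' ha j := by rw [neg_vecMul]; exact (ha j).neg_right

section congrLattice

variable {m n : Type*} [Fintype m] (B : Matrix m n ℤ)

lemma mem_congrLattice {e : ℕ} {v : m → ℤ} : v ∈ congrLattice B e ↔ ∀ j, (e : ℤ) ∣ (v ᵥ* B) j :=
  Iff.rfl

lemma congrLattice_one : congrLattice B 1 = ⊤ :=
  eq_top_iff.2 fun _ _ _ => by simp

lemma congrLattice_mul {a b : ℕ} (hab : a.Coprime b) :
    congrLattice B (a * b) = congrLattice B a ⊓ congrLattice B b := by
  ext v
  simp only [AddSubgroup.mem_inf, mem_congrLattice, Nat.cast_mul, ← forall_and]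
  refine forall_congr' fun j => ⟨fun h => ⟨dvd_of_mul_right_dvd h, dvd_of_mul_left_dvd h⟩,
    fun h => (Nat.isCoprime_iff_coprime.2 hab).mul_dvd h.1 h.2⟩

end congrLattice

lemma dvd_mul_sub_mul_of_dvd_cross {R : Type*} [CommRing R] {d : R} {u w : Fin 3 → R}
    (h : ∀ i, d ∣ (u ⨯₃ w) i) (i i' : Fin 3) : d ∣ u i * w i' - u i' * w i := by
  have h0 := h 0
  have h1 := h 1
  have h2 := h 2
  simp only [Fin.isValue, cross_apply, Nat.succ_eq_add_one, Nat.reduceAdd, cons_val_zero,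
    cons_val_one, cons_val] at h0 h1 h2
  fin_cases i <;> fin_cases i' <;> simp only [Fin.zero_eta, Fin.mk_one, Fin.reduceFinMk,
    sub_self, dvd_zero] <;> first
    | assumption
    | exact dvd_sub_comm.1 ‹_›

section Pivot

variable {m n : Type*} [Fintype m] (B : Matrix m n ℤ)

lemma mem_congrLattice_iff_of_isCoprime {e : ℕ} {i₀ : m} {j₀ : n}
    (hminor : ∀ i j i' j', (e : ℤ) ∣ B i j * B i' j' - B i j' * B i' j)
    (hpiv : IsCoprime (e : ℤ) (B i₀ j₀)) (v : m → ℤ) :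
    v ∈ congrLattice B e ↔ (e : ℤ) ∣ (v ᵥ* B) j₀ := by
  refine ⟨fun h => h j₀, fun h j => hpiv.dvd_of_dvd_mul_left ?_⟩
  have hcomb : B i₀ j₀ * (v ᵥ* B) j
      = ∑ i, v i * (B i₀ j₀ * B i j - B i₀ j * B i j₀) + B i₀ j * (v ᵥ* B) j₀ := by
    simp only [vecMul, dotProduct, Finset.mul_sum, ← Finset.sum_add_distrib]
    exact Finset.sum_congr rfl fun i _ => by ring
  rw [hcomb]
  exact dvd_add (Finset.dvd_sum fun i _ => (hminor _ _ _ _).mul_left _) (h.mul_left _)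

lemma index_congrLattice_of_isCoprime [DecidableEq m] {e : ℕ} {i₀ : m} {j₀ : n}
    (hminor : ∀ i j i' j', (e : ℤ) ∣ B i j * B i' j' - B i j' * B i' j)
    (hpiv : IsCoprime (e : ℤ) (B i₀ j₀)) : (congrLattice B e).index = e := by
  let f : (m → ℤ) →+ ZMod e := (Int.castAddHom (ZMod e)).comp
    ((Pi.evalAddMonoidHom (fun _ => ℤ) j₀).comp B.vecMulLinear.toAddMonoidHom)
  have hker : congrLattice B e = f.ker := by
    ext v
    rw [mem_congrLattice_iff_of_isCoprime B hminor hpiv, AddMonoidHom.mem_ker]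
    exact (ZMod.intCast_zmod_eq_zero_iff_dvd _ e).symm
  have hsurj : Function.Surjective f := by
    obtain ⟨x, y, hxy⟩ := hpiv
    have hinv : (y : ZMod e) * B i₀ j₀ = 1 := by
      simpa using congrArg (Int.cast : ℤ → ZMod e) hxy
    intro t
    obtain ⟨z, rfl⟩ := ZMod.intCast_surjective t
    refine ⟨Pi.single i₀ (z * y), ?_⟩
    simp [f, mul_assoc, hinv]
  rw [hker, AddSubgroup.index_ker, AddMonoidHom.range_eq_top_of_surjective f hsurj,
    AddSubgroup.card_top, Nat.card_zmod]

end Pivot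

def EntriesCoprime {m n : Type*} (B : Matrix m n ℤ) (D : ℕ) : Prop :=
  ∀ p : ℕ, p.Prime → p ∣ D → ∃ i j, ¬ (p : ℤ) ∣ B i j

section Primitive

variable {m n : Type*} (B : Matrix m n ℤ) {D : ℕ}

lemma exists_isCoprime_entry (hprim : EntriesCoprime B D)
    {p : ℕ} (hp : p.Prime) (hpD : p ∣ D) (k : ℕ) : ∃ i j, IsCoprime ((p : ℤ) ^ k) (B i j) := by
  obtain ⟨i, j, hij⟩ := hprim p hp hpD
  exact ⟨i, j, ((Nat.prime_iff_prime_int.1 hp).coprime_iff_not_dvd.2 hij).pow_left⟩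

lemma dvd_of_forall_dvd_mul_entry (hprim : EntriesCoprime B D)
    {c : ℕ} (h : ∀ i j, (D : ℤ) ∣ c * B i j) : D ∣ c := by
  refine (Nat.dvd_iff_prime_pow_dvd_dvd c D).2 fun p k hp hpk => ?_
  rcases k.eq_zero_or_pos with rfl | hk
  · simp
  obtain ⟨i, j, hij⟩ := exists_isCoprime_entry B hprim hp ((dvd_pow_self p hk.ne').trans hpk) k
  have hpkc := hij.dvd_of_dvd_mul_right ((Int.natCast_dvd_natCast.2 hpk).trans (h i j))
  exact_mod_cast hpkc

lemma index_congrLattice [Fintype m] [DecidableEq m] (hD : D ≠ 0)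
    (hminor : ∀ i j i' j', (D : ℤ) ∣ B i j * B i' j' - B i j' * B i' j)
    (hprim : EntriesCoprime B D) :
    (congrLattice B D).index = D := by
  suffices ∀ e, e ∣ D → (congrLattice B e).index = e from this D dvd_rfl
  intro e
  induction e using Nat.recOnPosPrimePosCoprime with
  | zero => exact fun h => absurd (Nat.eq_zero_of_zero_dvd h) hD
  | one => exact fun _ => by rw [congrLattice_one, AddSubgroup.index_top]
  | prime_pow p a hp ha =>
    intro hdvd
    obtain ⟨i, j, hij⟩ :=
      exists_isCoprime_entry B hprim hp ((dvd_pow_self p ha.ne').trans hdvd) a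
    refine index_congrLattice_of_isCoprime B (fun i j i' j' => ?_) (by exact_mod_cast hij)
    exact (Int.natCast_dvd_natCast.2 hdvd).trans (hminor i j i' j')
  | coprime a b ha hb hab iha ihb =>
    intro hdvd
    have hia := iha (dvd_of_mul_right_dvd hdvd)
    have hib := ihb (dvd_of_mul_left_dvd hdvd)
    rw [congrLattice_mul B hab, AddSubgroup.index_inf_of_coprime (by omega) (by omega)
      (by rwa [hia, hib]), hia, hib]

end Primitive

lemma dvd_minor_of_cross (B : Matrix (Fin 3) (Fin 3) ℤ) {D : ℕ}
    (hcross : ∀ u v, (B *ᵥ u) ⨯₃ (B *ᵥ v) = (D : ℤ) • B *ᵥ (u ⨯₃ v)) (i j i' j' : Fin 3) :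
    (D : ℤ) ∣ B i j * B i' j' - B i j' * B i' j := by
  have hcol : ∀ k, (D : ℤ) ∣ (B.col j ⨯₃ B.col j') k := fun k => by
    rw [← mulVec_single_one, ← mulVec_single_one, hcross]
    exact dvd_mul_right _ _
  simpa [mul_comm] using dvd_mul_sub_mul_of_dvd_cross hcol i i'

noncomputable def divMatrix {d : ℕ} (B : Matrix (Fin d) (Fin d) ℤ) (D : ℕ) :
    Matrix (Fin d) (Fin d) ℝ :=
  (D : ℝ)⁻¹ • B.map (Int.cast : ℤ → ℝ)

section divMatrix

variable {d : ℕ} (B : Matrix (Fin d) (Fin d) ℤ) {D : ℕ}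

lemma divMatrix_apply (i j : Fin d) : divMatrix B D i j = (D : ℝ)⁻¹ * B i j := rfl

lemma divMatrix_mul_transpose (hD : D ≠ 0) (hB : B * Bᵀ = (D : ℤ) ^ 2 • 1) :
    divMatrix B D * (divMatrix B D)ᵀ = 1 := by
  have hBR : B.map (Int.cast : ℤ → ℝ) * (B.map Int.cast)ᵀ = (D : ℝ) ^ 2 • 1 := by
    ext i j
    have hij := congrFun₂ hB i j
    simp only [mul_apply, transpose_apply, Matrix.smul_apply, map_apply, one_apply,
      smul_eq_mul] at hij ⊢
    exact_mod_cast hij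
  have hDR : (D : ℝ) ≠ 0 := by exact_mod_cast hD
  rw [divMatrix, transpose_smul, smul_mul_smul_comm, hBR, smul_smul]
  field_simp
  exact one_smul ℝ _

lemma divMatrix_transpose_mulVec (v : Fin d → ℤ) :
    (divMatrix B D)ᵀ *ᵥ intVec d v = (D : ℝ)⁻¹ • intVec d (v ᵥ* B) := by
  ext i
  simp only [mulVec, dotProduct, divMatrix, transpose_apply, Matrix.smul_apply, map_apply,
    smul_eq_mul, intVec_apply, Pi.smul_apply, vecMul, Int.cast_sum, Int.cast_mul, Finset.mul_sum]
  exact Finset.sum_congr rfl fun _ _ => by ring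

lemma comap_intVec_latmap_divMatrix (hD : D ≠ 0) (hB : B * Bᵀ = (D : ℤ) ^ 2 • 1) :
    (latmap (divMatrix B D) (Zd d)).comap (intVec d) = congrLattice B D := by
  have h := divMatrix_mul_transpose B hD hB
  ext v
  rw [AddSubgroup.mem_comap, mem_latmap_iff (mul_eq_one_comm.1 h) h, divMatrix_transpose_mulVec,
    inv_smul_intVec_mem_Zd_iff hD, mem_congrLattice]

lemma isLeast_den_divMatrix (hD : D ≠ 0)
    (hprim : EntriesCoprime B D) :
    IsLeast {c : ℕ | 0 < c ∧ ∀ i j, ∃ z : ℤ, (c : ℝ) * divMatrix B D i j = z} D := by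
  have hint : ∀ c : ℕ, (∀ i j, ∃ z : ℤ, (c : ℝ) * divMatrix B D i j = z) ↔
      ∀ i j, (D : ℤ) ∣ c * B i j := fun c => forall₂_congr fun i j => by
    rw [← exists_intCast_eq_inv_mul_iff hD, divMatrix_apply]
    push_cast
    simp_rw [eq_comm, mul_left_comm]
  refine ⟨⟨Nat.pos_of_ne_zero hD, (hint D).2 fun i j => dvd_mul_right _ _⟩, ?_⟩
  rintro c ⟨hc, h⟩
  exact Nat.le_of_dvd hc (dvd_of_forall_dvd_mul_entry B hprim ((hint c).1 h))

end divMatrix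

lemma relIndex_latmap_divMatrix (B : Matrix (Fin 3) (Fin 3) ℤ) {D : ℕ} (hD : D ≠ 0)
    (hB : B * Bᵀ = (D : ℤ) ^ 2 • 1)
    (hcross : ∀ u v, (B *ᵥ u) ⨯₃ (B *ᵥ v) = (D : ℤ) • B *ᵥ (u ⨯₃ v))
    (hprim : EntriesCoprime B D) :
    (Zd 3 ⊓ latmap (divMatrix B D) (Zd 3)).relIndex (Zd 3) = D := by
  rw [relIndex_Zd_eq_index_comap, comap_intVec_latmap_divMatrix B hD hB,
    index_congrLattice B hD (dvd_minor_of_cross B hcross) hprim]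

lemma two_dvd_of_four_dvd_sq_add_sq_add_sq {a b c : ℤ} (h : 4 ∣ a ^ 2 + b ^ 2 + c ^ 2) :
    2 ∣ a ∧ 2 ∣ b ∧ 2 ∣ c := by
  have sq_mod (x : ℤ) : 2 ∣ x ∧ 4 ∣ x ^ 2 ∨ x ^ 2 % 4 = 1 := by
    rcases Int.even_or_odd' x with ⟨y, rfl | rfl⟩
    · exact Or.inl ⟨dvd_mul_right 2 y, y ^ 2, by ring⟩
    · exact Or.inr (Int.sq_mod_four_eq_one_of_odd ⟨y, rfl⟩)
  rcases sq_mod a with ha | ha <;> rcases sq_mod b with hb | hb <;> rcases sq_mod c with hc | hc <;>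
    omega

lemma two_pow_dvd_of_sq_add_sq_add_sq (s : ℕ) {a b c t : ℤ}
    (h : a ^ 2 + b ^ 2 + c ^ 2 = (2 ^ s * t) ^ 2) : 2 ^ s ∣ a ∧ 2 ^ s ∣ b ∧ 2 ^ s ∣ c := by
  induction s generalizing a b c with
  | zero => simp
  | succ s ih =>
    obtain ⟨⟨a, rfl⟩, ⟨b, rfl⟩, ⟨c, rfl⟩⟩ :=
      two_dvd_of_four_dvd_sq_add_sq_add_sq ⟨(2 ^ s * t) ^ 2, by rw [h]; ring⟩
    obtain ⟨ha, hb, hc⟩ := ih (a := a) (b := b) (c := c)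
      ((mul_right_inj' four_ne_zero).1 (by linear_combination h))
    rw [pow_succ']
    exact ⟨mul_dvd_mul_left 2 ha, mul_dvd_mul_left 2 hb, mul_dvd_mul_left 2 hc⟩

def cayleyNum (k l m n : ℤ) : Matrix (Fin 3) (Fin 3) ℤ :=
  !![k^2 + l^2 - m^2 - n^2, -2*k*n + 2*l*m, 2*k*m + 2*l*n;
     2*k*n + 2*l*m, k^2 - l^2 + m^2 - n^2, -2*k*l + 2*m*n;
     -2*k*m + 2*l*n, 2*k*l + 2*m*n, k^2 - l^2 - m^2 + n^2]

section cayleyNum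

variable (k l m n : ℤ)

lemma cayley_eq_smul_cayleyNum : cayley k l m n =
    ((k ^ 2 + l ^ 2 + m ^ 2 + n ^ 2 : ℤ) : ℝ)⁻¹ • (cayleyNum k l m n).map (Int.cast : ℤ → ℝ) := by
  ext i j
  fin_cases i <;> fin_cases j <;> simp [cayley, cayleyNum]

lemma cayleyNum_mul_transpose :
    cayleyNum k l m n * (cayleyNum k l m n)ᵀ = (k ^ 2 + l ^ 2 + m ^ 2 + n ^ 2) ^ 2 • 1 := by
  ext i j
  fin_cases i <;> fin_cases j <;> simp [cayleyNum, mul_apply, Fin.sum_univ_three] <;> ring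

lemma cayleyNum_mulVec_cross (u v : Fin 3 → ℤ) :
    (cayleyNum k l m n *ᵥ u) ⨯₃ (cayleyNum k l m n *ᵥ v) =
      (k ^ 2 + l ^ 2 + m ^ 2 + n ^ 2) • cayleyNum k l m n *ᵥ (u ⨯₃ v) := by
  ext i
  fin_cases i <;> simp [cayleyNum, cross_apply, dotProduct, Fin.sum_univ_three] <;> ring

lemma exists_not_dvd_cayleyNum (hprim : Int.gcd (Int.gcd k l) (Int.gcd m n) = 1) {p : ℕ}
    (hp : p.Prime) (hp2 : p ≠ 2) (hpN : (p : ℤ) ∣ k ^ 2 + l ^ 2 + m ^ 2 + n ^ 2) :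
    ∃ i j, ¬ (p : ℤ) ∣ cayleyNum k l m n i j := by
  by_contra! hM
  have hpI : Prime (p : ℤ) := Nat.prime_iff_prime_int.1 hp
  have hp4 : ¬ (p : ℤ) ∣ 4 := fun h => hp2 <| (Nat.prime_dvd_prime_iff_eq hp Nat.prime_two).1 <|
    hp.dvd_of_dvd_pow (n := 2) (by exact_mod_cast h)
  have hsq : ∀ x : ℤ, (p : ℤ) ∣ 4 * x ^ 2 → (p : ℤ) ∣ x := fun x h =>
    hpI.dvd_of_dvd_pow ((hpI.dvd_or_dvd h).resolve_left hp4)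
  obtain ⟨h00, h11, h22⟩ : (p : ℤ) ∣ k ^ 2 + l ^ 2 - m ^ 2 - n ^ 2 ∧
      (p : ℤ) ∣ k ^ 2 - l ^ 2 + m ^ 2 - n ^ 2 ∧ (p : ℤ) ∣ k ^ 2 - l ^ 2 - m ^ 2 + n ^ 2 :=
    ⟨hM 0 0, hM 1 1, hM 2 2⟩
  -- `4κ²`, `4λ²`, `4μ²`, `4ν²` are `|q|² ± M₀₀ ± M₁₁ ± M₂₂`
  have hk := hsq k <| (dvd_add (dvd_add (dvd_add hpN h00) h11) h22).trans (dvd_of_eq (by ring))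
  have hl := hsq l <| (dvd_sub (dvd_sub (dvd_add hpN h00) h11) h22).trans (dvd_of_eq (by ring))
  have hm := hsq m <| (dvd_sub (dvd_add (dvd_sub hpN h00) h11) h22).trans (dvd_of_eq (by ring))
  have hn := hsq n <| (dvd_add (dvd_sub (dvd_sub hpN h00) h11) h22).trans (dvd_of_eq (by ring))
  have h1 : p ∣ 1 := hprim ▸ Int.dvd_gcd (Int.dvd_coe_gcd hk hl) (Int.dvd_coe_gcd hm hn)
  exact hp.not_dvd_one h1

end cayleyNum

section OddPart

variable {k l m n : ℤ} {L D : ℕ}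

lemma exists_cayleyNum_eq_two_pow_smul (hN : k ^ 2 + l ^ 2 + m ^ 2 + n ^ 2 = 2 ^ L * D) :
    ∃ B, cayleyNum k l m n = (2 : ℤ) ^ L • B := by
  have hdvd : ∀ i j, (2 : ℤ) ^ L ∣ cayleyNum k l m n i j := by
    intro i j
    have hrow := congrFun₂ (cayleyNum_mul_transpose k l m n) i i
    simp only [mul_apply, transpose_apply, Fin.sum_univ_three, Matrix.smul_apply, one_apply_eq,
      smul_eq_mul, mul_one, hN] at hrow
    obtain ⟨h0, h1, h2⟩ := two_pow_dvd_of_sq_add_sq_add_sq L (a := cayleyNum k l m n i 0)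
      (b := cayleyNum k l m n i 1) (c := cayleyNum k l m n i 2) (t := D)
      (by linear_combination hrow)
    fin_cases j
    exacts [h0, h1, h2]
  exact ⟨Matrix.of fun i j => cayleyNum k l m n i j / 2 ^ L, by
    ext i j; simp [Int.mul_ediv_cancel' (hdvd i j)]⟩

variable {B : Matrix (Fin 3) (Fin 3) ℤ}

lemma mul_transpose_eq_of_cayleyNum_eq (hN : k ^ 2 + l ^ 2 + m ^ 2 + n ^ 2 = 2 ^ L * D)
    (hMB : cayleyNum k l m n = (2 : ℤ) ^ L • B) : B * Bᵀ = (D : ℤ) ^ 2 • 1 := by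
  refine smul_right_injective _ (r := (2 : ℤ) ^ L * 2 ^ L) (by positivity) ?_
  dsimp only
  rw [← smul_mul_smul_comm, ← transpose_smul, ← hMB, cayleyNum_mul_transpose, hN, smul_smul]
  ring_nf

lemma mulVec_cross_of_cayleyNum_eq (hN : k ^ 2 + l ^ 2 + m ^ 2 + n ^ 2 = 2 ^ L * D)
    (hMB : cayleyNum k l m n = (2 : ℤ) ^ L • B) (u v : Fin 3 → ℤ) :
    (B *ᵥ u) ⨯₃ (B *ᵥ v) = (D : ℤ) • B *ᵥ (u ⨯₃ v) := by
  have h := cayleyNum_mulVec_cross k l m n u v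
  rw [hMB, hN] at h
  simp only [smul_mulVec, map_smul, LinearMap.smul_apply, smul_smul] at h
  refine smul_right_injective _ (r := (2 : ℤ) ^ L * 2 ^ L) (by positivity) ?_
  dsimp only
  rw [smul_smul]
  convert h using 2
  ring

lemma cayley_eq_divMatrix (hN : k ^ 2 + l ^ 2 + m ^ 2 + n ^ 2 = 2 ^ L * D)
    (hMB : cayleyNum k l m n = (2 : ℤ) ^ L • B) : cayley k l m n = divMatrix B D := by
  ext i j
  have hij := congrFun₂ hMB i j
  have h2 : (2 : ℝ) ^ L ≠ 0 := by positivity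
  rw [cayley_eq_smul_cayleyNum, hN, divMatrix_apply]
  simp only [Matrix.smul_apply, map_apply, hij, smul_eq_mul]
  push_cast
  field_simp

lemma entriesCoprime_of_cayleyNum_eq (hprim : Int.gcd (Int.gcd k l) (Int.gcd m n) = 1)
    (hN : k ^ 2 + l ^ 2 + m ^ 2 + n ^ 2 = 2 ^ L * D) (hMB : cayleyNum k l m n = (2 : ℤ) ^ L • B)
    (hD : ¬ 2 ∣ D) : EntriesCoprime B D := by
  intro p hp hpD
  have hp2 : p ≠ 2 := by rintro rfl; exact hD hpD
  obtain ⟨i, j, hij⟩ := exists_not_dvd_cayleyNum k l m n hprim hp hp2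
    (hN ▸ (Int.natCast_dvd_natCast.2 hpD).mul_left _)
  exact ⟨i, j, fun h => hij (by rw [hMB]; exact h.mul_left _)⟩

end OddPart

lemma sum_sq_pos_of_gcd_eq_one {k l m n : ℤ} (hprim : Int.gcd (Int.gcd k l) (Int.gcd m n) = 1) :
    0 < k ^ 2 + l ^ 2 + m ^ 2 + n ^ 2 := by
  by_contra! h
  obtain ⟨rfl, rfl, rfl, rfl⟩ : k = 0 ∧ l = 0 ∧ m = 0 ∧ n = 0 := by
    refine ⟨?_, ?_, ?_, ?_⟩ <;> nlinarith [sq_nonneg k, sq_nonneg l, sq_nonneg m, sq_nonneg n]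
  simp at hprim

end CayleyCoincidence

open CayleyCoincidence

/-- For a primitive integer quaternion `q = (κ,λ,μ,ν)`, the coincidence index of the Cayley
rotation `R(q)` on `ℤ³` equals the denominator `den(R(q))`, which is the odd part
`|q|²/2^ℓ` of the norm `|q|²`. -/
theorem stmt13 (k l m n : ℤ)
    (hprim : Int.gcd (Int.gcd k l) (Int.gcd m n) = 1) :
    (Zd 3 ⊓ latmap (cayley k l m n) (Zd 3)).relIndex (Zd 3) =
      (k^2 + l^2 + m^2 + n^2).toNat / 2 ^ ((k^2 + l^2 + m^2 + n^2).toNat.factorization 2) ∧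
    IsLeast {c : ℕ | 0 < c ∧ ∀ i j, ∃ z : ℤ, (c : ℝ) * cayley k l m n i j = (z : ℝ)}
      ((k^2 + l^2 + m^2 + n^2).toNat / 2 ^ ((k^2 + l^2 + m^2 + n^2).toNat.factorization 2)) := by
  have hN := sum_sq_pos_of_gcd_eq_one hprim
  set N := (k ^ 2 + l ^ 2 + m ^ 2 + n ^ 2).toNat with hNdef
  set L := N.factorization 2
  set D := N / 2 ^ L
  have hND : k ^ 2 + l ^ 2 + m ^ 2 + n ^ 2 = 2 ^ L * D := by
    rw [← Int.toNat_of_nonneg hN.le, ← hNdef, ← Nat.ordProj_mul_ordCompl_eq_self N 2]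
    push_cast
    rfl
  have hD2 : ¬ 2 ∣ D := Nat.not_dvd_ordCompl Nat.prime_two (by omega)
  have hD : D ≠ 0 := by rintro h; exact hD2 (h ▸ dvd_zero 2)
  obtain ⟨B, hMB⟩ := exists_cayleyNum_eq_two_pow_smul hND
  have hprimB := entriesCoprime_of_cayleyNum_eq hprim hND hMB hD2
  rw [cayley_eq_divMatrix hND hMB]
  exact ⟨relIndex_latmap_divMatrix B hD (mul_transpose_eq_of_cayleyNum_eq hND hMB)
    (mulVec_cross_of_cayleyNum_eq hND hMB) hprimB, isLeast_den_divMatrix B hD hprimB⟩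
end

section
/- The Dirichlet series generating function F_n(s) = Σ_{m≥1} f_n(m)/m^s for the number of index-m subgroups of ℤ^n equals the product ζ(s)·ζ(s-1)·⋯·ζ(s-n+1) of shifted Riemann zeta functions; in particular for n = 2, f_2(m) = σ₁(m) = Σ_{d|m} d. -/
/-- `fSub n m` is the number of subgroups of index `m` in the free abelian group `ℤ^n`. -/
noncomputable def fSub (n m : ℕ) : ℕ :=
  Nat.card {H : AddSubgroup (Fin n → ℤ) // H.index = m}

open AddSubgroup

lemma card_partition {α β : Type*} [Finite α] [DecidableEq β] (g : α → β) (t : Finset β)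
    (hg : ∀ a, g a ∈ t) : Nat.card α = ∑ b ∈ t, Nat.card {a // g a = b} := by
  classical
  have : Fintype α := Fintype.ofFinite α
  rw [Nat.card_eq_fintype_card, ← Finset.card_univ,
    Finset.card_eq_sum_card_fiberwise (fun a _ => hg a)]
  refine Finset.sum_congr rfl fun b _ => ?_
  rw [Nat.card_eq_fintype_card, Fintype.card_subtype]

lemma nat_card_sigma {ι : Type*} [Fintype ι] (f : ι → Type*) [∀ i, Finite (f i)] :
    Nat.card (Σ i, f i) = ∑ i, Nat.card (f i) := by
  have : ∀ i, Fintype (f i) := fun i => Fintype.ofFinite _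
  simp [Nat.card_eq_fintype_card, Fintype.card_sigma]

lemma map_addEquiv_eq_comap {G G' : Type*} [AddGroup G] [AddGroup G'] (e : G ≃+ G')
    (H : AddSubgroup G) : H.map e.toAddMonoidHom = H.comap e.symm.toAddMonoidHom := by
  ext x
  simp only [AddSubgroup.mem_map, AddSubgroup.mem_comap]
  constructor
  · rintro ⟨y, hy, rfl⟩; simpa using hy
  · intro h; exact ⟨e.symm x, h, by simp⟩

lemma index_map_addEquiv {G G' : Type*} [AddGroup G] [AddGroup G'] (e : G ≃+ G')
    (H : AddSubgroup G) : (H.map e.toAddMonoidHom).index = H.index := by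
  rw [map_addEquiv_eq_comap, AddSubgroup.index_comap_of_surjective _ e.symm.surjective]

def subgroupIndexEquiv {G G' : Type*} [AddGroup G] [AddGroup G'] (e : G ≃+ G') (m : ℕ) :
    {H : AddSubgroup G // H.index = m} ≃ {H : AddSubgroup G' // H.index = m} where
  toFun H := ⟨H.1.map e.toAddMonoidHom, by rw [index_map_addEquiv]; exact H.2⟩
  invFun H := ⟨H.1.map e.symm.toAddMonoidHom, by rw [index_map_addEquiv]; exact H.2⟩
  left_inv H := by
    ext x
    simp only [map_addEquiv_eq_comap, AddSubgroup.mem_comap, AddEquiv.symm_symm]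
    simp
  right_inv H := by
    ext x
    simp only [map_addEquiv_eq_comap, AddSubgroup.mem_comap, AddEquiv.symm_symm]
    simp

open AddSubgroup

variable {A : Type*} [AddCommGroup A]

/-- Index of a subgroup of a product equals index of its "vertical" part times the
index of its projection. -/
lemma index_eq_comap_mul_map {B : Type*} [AddCommGroup B] (H : AddSubgroup (A × B)) :
    H.index = (H.comap (AddMonoidHom.inl A B)).index * (H.map (AddMonoidHom.snd A B)).index := by
  set J := H.map (AddMonoidHom.snd A B) with hJ
  set K' := J.comap (AddMonoidHom.snd A B) with hK'
  have hHK' : H ≤ K' := fun x hx => AddSubgroup.mem_comap.mpr ⟨x, hx, rfl⟩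
  have h1 : H.relIndex K' * K'.index = H.index := relIndex_mul_index hHK'
  have h2 : K'.index = J.index :=
    AddSubgroup.index_comap_of_surjective _ (fun b => ⟨(0, b), rfl⟩)
  have h3 : H.relIndex K' = (H.comap (AddMonoidHom.inl A B)).index := by
    -- build a surjective hom from A onto K' ⧸ (H.addSubgroupOf K') with kernel comap inl H
    set N := H.addSubgroupOf K' with hN
    have hmem : ∀ x : A, (x, (0 : B)) ∈ K' := fun x =>
      AddSubgroup.mem_comap.mpr (zero_mem J)
    let f : A →+ K' ⧸ N :=
      (QuotientAddGroup.mk' N).comp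
        { toFun := fun x => ⟨(x, 0), hmem x⟩
          map_zero' := rfl
          map_add' := fun x y => by ext <;> simp }
    have hker : f.ker = H.comap (AddMonoidHom.inl A B) := by
      ext x
      simp only [AddMonoidHom.mem_ker, AddMonoidHom.coe_comp, Function.comp_apply,
        QuotientAddGroup.mk'_apply, AddSubgroup.mem_comap, f]
      rw [QuotientAddGroup.eq_zero_iff]
      rfl
    have hsurj : Function.Surjective f := by
      intro q
      obtain ⟨⟨⟨x, t⟩, hxt⟩, rfl⟩ := QuotientAddGroup.mk_surjective q
      have : t ∈ J := hxt
      obtain ⟨⟨y, t'⟩, hy, ht'⟩ := AddSubgroup.mem_map.mp this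
      have ht'' : t' = t := ht'
      refine ⟨x - y, ?_⟩
      simp only [AddMonoidHom.coe_comp, Function.comp_apply, QuotientAddGroup.mk'_apply, f]
      rw [QuotientAddGroup.eq]
      have h5 : (-(x - y, (0:B)) + (x, t)) ∈ H := by
        have : (-(x - y, (0:B)) + (x, t)) = (y, t') := by ext <;> simp [ht'']
        rw [this]; exact hy
      exact AddSubgroup.mem_addSubgroupOf.mpr h5
    have : (K' ⧸ N) ≃+ A ⧸ f.ker := (QuotientAddGroup.quotientKerEquivOfSurjective f hsurj).symm
    rw [AddSubgroup.relIndex, AddSubgroup.index, Nat.card_congr this.toEquiv, hker,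
      AddSubgroup.index]
  rw [← h1, h2, h3]

/-- Every subgroup of ℤ is generated by its index. -/
lemma int_eq_zmultiples_index (J : AddSubgroup ℤ) : J = zmultiples ((J.index : ℤ)) := by
  obtain ⟨a, rfl⟩ := Int.subgroup_cyclic J
  have h1 : AddSubgroup.closure {a} = zmultiples a := by
    rw [AddSubgroup.zmultiples_eq_closure]
  rw [h1, Int.index_zmultiples, Int.zmultiples_natAbs]

variable {A : Type*} [AddCommGroup A]

/-- Reconstruction of a subgroup of `A × ℤ` from a subgroup `K` of `A`, a positive integer `a`,
and a coset representative `w`. -/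
def recon (K : AddSubgroup A) (a : ℕ) (w : A) : AddSubgroup (A × ℤ) :=
  (K.map (AddMonoidHom.inl A ℤ)) ⊔ zmultiples (w, (a : ℤ))

lemma mem_recon {K : AddSubgroup A} {a : ℕ} {w : A} {x : A} {t : ℤ} :
    (x, t) ∈ recon K a w ↔ ∃ k : ℤ, t = k * a ∧ x - k • w ∈ K := by
  rw [recon, AddSubgroup.mem_sup]
  constructor
  · rintro ⟨y, hy, z, hz, hyz⟩
    obtain ⟨y', hy', rfl⟩ := AddSubgroup.mem_map.mp hy
    obtain ⟨k, rfl⟩ := AddSubgroup.mem_zmultiples_iff.mp hz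
    have h2 := congrArg Prod.snd hyz
    have h1 := congrArg Prod.fst hyz
    simp only [Prod.fst_add, Prod.snd_add, Prod.smul_fst, Prod.smul_snd] at h1 h2
    refine ⟨k, ?_, ?_⟩
    · rw [← h2]; simp [zsmul_eq_mul]
    · have : x - k • w = y' := by rw [← h1]; abel
      rw [this]; exact hy'
  · rintro ⟨k, rfl, hk⟩
    refine ⟨((x - k • w : A), (0 : ℤ)), AddSubgroup.mem_map.mpr ⟨x - k • w, hk, rfl⟩,
      k • (w, (a : ℤ)), AddSubgroup.mem_zmultiples_iff.mpr ⟨k, rfl⟩, ?_⟩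
    ext
    · simp
    · simp [zsmul_eq_mul]

lemma comap_recon {K : AddSubgroup A} {a : ℕ} (ha : a ≠ 0) (w : A) :
    (recon K a w).comap (AddMonoidHom.inl A ℤ) = K := by
  ext x
  rw [AddSubgroup.mem_comap]
  have : (AddMonoidHom.inl A ℤ) x = (x, (0 : ℤ)) := rfl
  rw [this, mem_recon]
  constructor
  · rintro ⟨k, hk0, hk⟩
    have : k = 0 := by
      rcases mul_eq_zero.mp hk0.symm with h | h
      · exact h
      · exact absurd (Int.ofNat_eq_zero.mp h) ha
    rw [this] at hk; simpa using hk
  · intro hx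
    exact ⟨0, by simp, by simpa using hx⟩

lemma map_snd_recon {K : AddSubgroup A} {a : ℕ} (w : A) :
    (recon K a w).map (AddMonoidHom.snd A ℤ) = zmultiples ((a : ℤ)) := by
  apply le_antisymm
  · rintro t ⟨⟨x, t⟩, h, rfl⟩
    obtain ⟨k, hk, -⟩ := mem_recon.mp h
    exact AddSubgroup.mem_zmultiples_iff.mpr ⟨k, by simpa [zsmul_eq_mul] using hk.symm⟩
  · rw [AddSubgroup.zmultiples_le]
    exact ⟨(w, (a : ℤ)), mem_recon.mpr ⟨1, by simp, by simpa using zero_mem K⟩, rfl⟩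

lemma index_recon {K : AddSubgroup A} {a : ℕ} (ha : a ≠ 0) (w : A) :
    (recon K a w).index = K.index * a := by
  rw [index_eq_comap_mul_map, comap_recon ha, map_snd_recon, Int.index_zmultiples,
    Int.natAbs_natCast]

lemma recon_eq {H : AddSubgroup (A × ℤ)} {a : ℕ}
    (hmap : H.map (AddMonoidHom.snd A ℤ) = zmultiples ((a : ℤ))) {w : A}
    (hw : (w, (a : ℤ)) ∈ H) : recon (H.comap (AddMonoidHom.inl A ℤ)) a w = H := by
  apply le_antisymm
  · rw [recon, sup_le_iff]
    refine ⟨?_, ?_⟩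
    · rintro p ⟨y, hy, rfl⟩; exact hy
    · rw [AddSubgroup.zmultiples_le]; exact hw
  · rintro ⟨x, t⟩ hxt
    have ht : t ∈ zmultiples ((a : ℤ)) := hmap ▸ AddSubgroup.mem_map.mpr ⟨(x, t), hxt, rfl⟩
    obtain ⟨k, rfl⟩ := AddSubgroup.mem_zmultiples_iff.mp ht
    refine mem_recon.mpr ⟨k, by simp [zsmul_eq_mul], ?_⟩
    have h1 : ((x, k • (a : ℤ)) - k • (w, (a : ℤ))) ∈ H := sub_mem hxt (zsmul_mem hw k)
    have h2 : ((x, k • (a : ℤ)) - k • (w, (a : ℤ))) = ((x - k • w : A), (0 : ℤ)) := by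
      ext <;> simp
    rw [h2] at h1
    exact h1

/-- The subgroups of `A × ℤ` of index `m` whose intersection with `A` is `K` are in bijection
with `A ⧸ K`. -/
noncomputable def quotEquiv (m d a : ℕ) (hm : m ≠ 0) (hda : d * a = m) (K : AddSubgroup A)
    (hK : K.index = d) :
    (A ⧸ K) ≃ {H : AddSubgroup (A × ℤ) //
      H.index = m ∧ H.comap (AddMonoidHom.inl A ℤ) = K} := by
  have ha : a ≠ 0 := fun h => hm (by rw [← hda, h, mul_zero])
  have hd : d ≠ 0 := fun h => hm (by rw [← hda, h, zero_mul])
  refine Equiv.ofBijective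
    (fun v => ⟨recon K a (Quotient.out v),
      by rw [index_recon ha, hK, hda], comap_recon ha _⟩) ⟨?_, ?_⟩
  · intro v v' h
    have h' : recon K a (Quotient.out v) = recon K a (Quotient.out v') :=
      congrArg Subtype.val h
    have hmem : ((Quotient.out v : A), ((a : ℤ))) ∈ recon K a (Quotient.out v') := by
      rw [← h']
      exact mem_recon.mpr ⟨1, by simp, by simpa using zero_mem K⟩
    obtain ⟨k, hk1, hk2⟩ := mem_recon.mp hmem
    have hk : k = 1 := by
      have : k * (a : ℤ) = 1 * (a : ℤ) := by rw [← hk1, one_mul]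
      exact mul_right_cancel₀ (Int.natCast_ne_zero.mpr ha) this
    rw [hk, one_smul] at hk2
    calc v = ⟦Quotient.out v⟧ := (Quotient.out_eq v).symm
      _ = ⟦Quotient.out v'⟧ := by
          exact (QuotientAddGroup.eq).mpr (by simpa [neg_add_eq_sub] using neg_mem hk2)
      _ = v' := Quotient.out_eq v'
  · rintro ⟨H, hHm, hHK⟩
    set J := H.map (AddMonoidHom.snd A ℤ) with hJ
    have hJa : J.index = a := by
      have h1 : m = d * J.index := by
        rw [← hHm, index_eq_comap_mul_map, hHK, hK]
      have h2 : d * a = d * J.index := by rw [hda, h1]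
      exact (Nat.eq_of_mul_eq_mul_left (Nat.pos_of_ne_zero hd) h2).symm
    have hJz : J = zmultiples ((a : ℤ)) := by
      rw [int_eq_zmultiples_index J, hJa]
    have haJ : ((a : ℤ)) ∈ J := by rw [hJz]; exact mem_zmultiples _
    obtain ⟨⟨p, pa⟩, hp, hpa⟩ := AddSubgroup.mem_map.mp haJ
    have hpa' : pa = (a : ℤ) := hpa
    subst hpa'
    refine ⟨QuotientAddGroup.mk p, Subtype.ext ?_⟩
    show recon K a (Quotient.out (QuotientAddGroup.mk p : A ⧸ K)) = H
    have hout : (Quotient.out (QuotientAddGroup.mk p : A ⧸ K) : A) - p ∈ K := by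
      have : (QuotientAddGroup.mk (Quotient.out (QuotientAddGroup.mk p : A ⧸ K)) : A ⧸ K)
          = QuotientAddGroup.mk p := Quotient.out_eq _
      have := (QuotientAddGroup.eq).mp this.symm
      simpa [neg_add_eq_sub] using this
    have hw : ((Quotient.out (QuotientAddGroup.mk p : A ⧸ K) : A), (a : ℤ)) ∈ H := by
      have h1 : ((Quotient.out (QuotientAddGroup.mk p : A ⧸ K) : A) - p, (0 : ℤ)) ∈ H := by
        have h' : (AddMonoidHom.inl A ℤ)
            ((Quotient.out (QuotientAddGroup.mk p : A ⧸ K) : A) - p) ∈ H := by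
          rw [← AddSubgroup.mem_comap, hHK]
          exact hout
        simpa using h'
      have h2 : ((Quotient.out (QuotientAddGroup.mk p : A ⧸ K) : A), (a : ℤ))
          = ((Quotient.out (QuotientAddGroup.mk p : A ⧸ K) : A) - p, (0 : ℤ)) + (p, (a : ℤ)) := by
        ext <;> simp
      rw [h2]
      exact add_mem h1 hp
    have hfin := recon_eq (show H.map (AddMonoidHom.snd A ℤ) = zmultiples ((a : ℤ)) by
      rw [← hJ, hJz]) hw
    rw [hHK] at hfin
    exact hfin

lemma card_step (m : ℕ) (hm : m ≠ 0)
    [Finite {H : AddSubgroup (A × ℤ) // H.index = m}]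
    (hfin : ∀ d, d ∣ m → Finite {K : AddSubgroup A // K.index = d}) :
    Nat.card {H : AddSubgroup (A × ℤ) // H.index = m}
      = ∑ d ∈ m.divisors, Nat.card {K : AddSubgroup A // K.index = d} * d := by
  classical
  have hg : ∀ H : {H : AddSubgroup (A × ℤ) // H.index = m},
      (H.1.comap (AddMonoidHom.inl A ℤ)).index ∈ m.divisors := fun H =>
    Nat.mem_divisors.mpr ⟨⟨(H.1.map (AddMonoidHom.snd A ℤ)).index,
      by rw [← index_eq_comap_mul_map]; exact H.2.symm⟩, hm⟩
  rw [card_partition _ m.divisors hg]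
  refine Finset.sum_congr rfl fun d hd => ?_
  obtain ⟨hdm, -⟩ := Nat.mem_divisors.mp hd
  have hd0 : d ≠ 0 := fun h => hm (by rw [h] at hdm; exact zero_dvd_iff.mp hdm)
  haveI : Finite {K : AddSubgroup A // K.index = d} := hfin d hdm
  haveI : Fintype {K : AddSubgroup A // K.index = d} := Fintype.ofFinite _
  set T := {H : {H : AddSubgroup (A × ℤ) // H.index = m} //
      (H.1.comap (AddMonoidHom.inl A ℤ)).index = d} with hT
  let h : T → {K : AddSubgroup A // K.index = d} :=
    fun H => ⟨H.1.1.comap (AddMonoidHom.inl A ℤ), H.2⟩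
  haveI : ∀ K : {K : AddSubgroup A // K.index = d}, Finite (A ⧸ K.1) := by
    intro K
    haveI : K.1.FiniteIndex := ⟨by rw [K.2]; exact hd0⟩
    infer_instance
  have e : T ≃ Σ K : {K : AddSubgroup A // K.index = d}, A ⧸ K.1 := by
    refine ((Equiv.sigmaFiberEquiv h).symm.trans (Equiv.sigmaCongrRight fun K => ?_))
    refine (?_ : {H : T // h H = K} ≃ {H : AddSubgroup (A × ℤ) //
        H.index = m ∧ H.comap (AddMonoidHom.inl A ℤ) = K.1}).trans
      (quotEquiv m d (m / d) hm (Nat.mul_div_cancel' hdm) K.1 K.2).symm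
    exact {
      toFun := fun H => ⟨H.1.1.1, H.1.1.2, congrArg Subtype.val H.2⟩
      invFun := fun H => ⟨⟨⟨H.1, H.2.1⟩, by rw [H.2.2]; exact K.2⟩, Subtype.ext H.2.2⟩
      left_inv := fun H => Subtype.ext (Subtype.ext (Subtype.ext rfl))
      right_inv := fun H => Subtype.ext rfl }
  rw [Nat.card_congr e, nat_card_sigma]
  have hcard : ∀ K : {K : AddSubgroup A // K.index = d}, Nat.card (A ⧸ K.1) = d := fun K => by
    rw [← AddSubgroup.index_eq_card, K.2]
  rw [Finset.sum_congr rfl (fun K _ => hcard K), Finset.sum_const, Finset.card_univ,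
    Nat.card_eq_fintype_card, smul_eq_mul]

lemma finite_index_subgroups (k d : ℕ) (hd : d ≠ 0) :
    Finite {K : AddSubgroup (Fin k → ℤ) // K.index = d} := by
  haveI : NeZero d := ⟨hd⟩
  let φ : (Fin k → ℤ) →+ (Fin k → ZMod d) :=
    { toFun := fun x i => ((x i : ℤ) : ZMod d)
      map_zero' := by funext i; simp
      map_add' := fun x y => by funext i; push_cast; simp }
  have key : ∀ K : AddSubgroup (Fin k → ℤ), K.index = d → (K.map φ).comap φ = K := by
    intro K hK
    rw [AddSubgroup.comap_map_eq]
    refine sup_eq_left.mpr ?_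
    intro x hx
    have hx' : φ x = 0 := hx
    have h1 : ∀ i, (d : ℤ) ∣ x i := by
      intro i
      have : ((x i : ℤ) : ZMod d) = 0 := congrFun hx' i
      exact (ZMod.intCast_zmod_eq_zero_iff_dvd _ _).mp this
    choose y hy using h1
    have hxy : x = d • y := by
      funext i
      rw [hy i]
      simp [nsmul_eq_mul]
    rw [hxy, ← hK]
    exact AddSubgroup.nsmul_index_mem K y
  refine Finite.of_injective (fun K : {K : AddSubgroup (Fin k → ℤ) // K.index = d} =>
    (K.1.map φ : AddSubgroup (Fin k → ZMod d))) ?_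
  intro K K' h
  apply Subtype.ext
  rw [← key K.1 K.2, ← key K'.1 K'.2]
  exact congrArg _ h

/-- `(Fin n → ℤ) × ℤ ≃+ (Fin (n+1) → ℤ)`. -/
def prodPiEquiv (n : ℕ) : ((Fin n → ℤ) × ℤ) ≃+ (Fin (n + 1) → ℤ) where
  toFun p := Fin.cons p.2 p.1
  invFun x := (fun i => x i.succ, x 0)
  left_inv p := by
    ext i
    · simp
    · simp
  right_inv x := by
    funext i
    refine Fin.cases ?_ ?_ i
    · simp
    · intro j; simp
  map_add' p q := by
    funext i
    refine Fin.cases ?_ ?_ i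
    · simp
    · intro j; simp

lemma fSub_succ (n m : ℕ) (hm : m ≠ 0) :
    fSub (n + 1) m = ∑ d ∈ m.divisors, fSub n d * d := by
  haveI h1 : Finite {H : AddSubgroup (Fin (n + 1) → ℤ) // H.index = m} :=
    finite_index_subgroups (n + 1) m hm
  haveI h2 : Finite {H : AddSubgroup ((Fin n → ℤ) × ℤ) // H.index = m} :=
    Finite.of_equiv _ (subgroupIndexEquiv (prodPiEquiv n) m).symm
  have e := subgroupIndexEquiv (prodPiEquiv n) m
  rw [fSub, ← Nat.card_congr e]
  exact card_step m hm (fun d hd =>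
    finite_index_subgroups n d (fun h => hm (by rw [h] at hd; exact zero_dvd_iff.mp hd)))

lemma fSub_zero (m : ℕ) : fSub 0 m = if m = 1 then 1 else 0 := by
  have huniq : ∀ H : AddSubgroup (Fin 0 → ℤ), H = ⊤ := by
    intro H
    ext x
    simp only [AddSubgroup.mem_top, iff_true]
    have : x = 0 := Subsingleton.elim x 0
    rw [this]
    exact zero_mem H
  have hidx : ∀ H : AddSubgroup (Fin 0 → ℤ), H.index = 1 := by
    intro H
    rw [huniq H, AddSubgroup.index_top]
  split
  · rename_i h
    subst h
    haveI : Unique {H : AddSubgroup (Fin 0 → ℤ) // H.index = 1} :=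
      { default := ⟨⊤, AddSubgroup.index_top⟩
        uniq := fun H => Subtype.ext (huniq H.1) }
    exact Nat.card_unique
  · rename_i h
    haveI : IsEmpty {H : AddSubgroup (Fin 0 → ℤ) // H.index = m} :=
      ⟨fun H => h (by rw [← H.2, hidx H.1])⟩
    exact Nat.card_of_isEmpty

lemma fSub_one_eq (m : ℕ) (hm : m ≠ 0) : fSub 1 m = 1 := by
  rw [fSub_succ 0 m hm]
  have h1 : ∀ d ∈ m.divisors, fSub 0 d * d = if d = 1 then 1 else 0 := by
    intro d _
    rw [fSub_zero]
    split
    · rename_i h; simp [h]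
    · simp
  rw [Finset.sum_congr rfl h1, Finset.sum_ite_eq' m.divisors 1 (fun _ => 1)]
  simp [Nat.one_mem_divisors.mpr hm]

lemma fSub_two_eq (m : ℕ) (hm : m ≠ 0) : fSub 2 m = ∑ d ∈ m.divisors, d := by
  rw [fSub_succ 1 m hm]
  refine Finset.sum_congr rfl fun d hd => ?_
  rw [fSub_one_eq d (Nat.pos_of_mem_divisors hd).ne', one_mul]

open scoped LSeries.notation

/-- The counting function as a complex sequence. -/
noncomputable def Fc (n : ℕ) : ℕ → ℂ := fun m => if m = 0 then 0 else (fSub n m : ℂ)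

lemma Fc_zero : Fc 0 = LSeries.delta := by
  funext m
  rcases eq_or_ne m 0 with rfl | hm
  · simp [Fc, LSeries.delta]
  · simp only [Fc, hm, if_false, fSub_zero, LSeries.delta]
    split <;> simp_all

lemma Fc_succ (n : ℕ) : Fc (n + 1) = (fun _ => (1 : ℂ)) ⍟ (fun d => (d : ℂ) * Fc n d) := by
  funext m
  rcases eq_or_ne m 0 with rfl | hm
  · simp [Fc, LSeries.convolution_def]
  · rw [LSeries.convolution_def]
    simp only [one_mul]
    rw [Nat.sum_divisorsAntidiagonal' (f := fun _ d => (d : ℂ) * Fc n d)]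
    have h1 : ∀ d ∈ m.divisors, (d : ℂ) * Fc n d = ((fSub n d * d : ℕ) : ℂ) := by
      intro d hd
      have hd0 : d ≠ 0 := (Nat.pos_of_mem_divisors hd).ne'
      simp only [Fc, hd0, if_false]
      push_cast
      ring
    rw [Finset.sum_congr rfl h1, ← Nat.cast_sum, ← fSub_succ n m hm]
    simp [Fc, hm]

lemma term_shift (f : ℕ → ℂ) (s : ℂ) :
    LSeries.term (fun d => (d : ℂ) * f d) s = LSeries.term f (s - 1) := by
  funext m
  rcases eq_or_ne m 0 with rfl | hm
  · simp [LSeries.term]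
  · rw [LSeries.term_of_ne_zero hm, LSeries.term_of_ne_zero hm,
      Complex.cpow_sub _ _ (Nat.cast_ne_zero.mpr hm), Complex.cpow_one,
      div_div_eq_mul_div]
    ring

lemma main_induction (n : ℕ) : ∀ s : ℂ, (n : ℝ) < s.re →
    LSeriesSummable (Fc n) s ∧
      LSeries (Fc n) s = ∏ k ∈ Finset.range n, riemannZeta (s - (k : ℂ)) := by
  induction n with
  | zero =>
    intro s _
    rw [Fc_zero]
    constructor
    · refine summable_of_ne_finset_zero (s := {1}) ?_
      intro m hm
      rcases eq_or_ne m 0 with rfl | hm0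
      · simp [LSeries.term]
      · rw [LSeries.term_of_ne_zero hm0, LSeries.delta]
        simp only [Finset.mem_singleton] at hm
        simp [hm]
    · simp [LSeries_delta]
  | succ n ih =>
    intro s hs
    have hcast : ((n : ℝ) + 1) < s.re := by push_cast at hs; linarith
    have hs1 : 1 < s.re := by
      have h0 : (0 : ℝ) ≤ (n : ℝ) := Nat.cast_nonneg n
      linarith
    have hs' : (n : ℝ) < (s - 1).re := by
      rw [Complex.sub_re, Complex.one_re]
      linarith
    obtain ⟨ihS, ihL⟩ := ih (s - 1) hs'
    have hshift : LSeriesSummable (fun d => (d : ℂ) * Fc n d) s := by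
      unfold LSeriesSummable
      rw [term_shift]
      exact ihS
    have hone : LSeriesSummable (fun _ => (1 : ℂ)) s := LSeriesSummable_one_iff.mpr hs1
    rw [Fc_succ]
    refine ⟨hone.convolution hshift, ?_⟩
    rw [LSeries_convolution' hone hshift]
    have hL1 : LSeries (fun _ => (1 : ℂ)) s = riemannZeta s := LSeries_one_eq_riemannZeta hs1
    have hLs : LSeries (fun d => (d : ℂ) * Fc n d) s = LSeries (Fc n) (s - 1) := by
      unfold LSeries
      rw [term_shift]
    rw [hL1, hLs, ihL, Finset.prod_range_succ', mul_comm]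
    congr 1
    · exact Finset.prod_congr rfl fun k _ => by congr 1; push_cast; ring
    · congr 1
      simp


/-- The Dirichlet series `F_n(s) = ∑_{m ≥ 1} f_n(m)/m^s` for the number of index-`m`
subgroups of `ℤ^n` equals `ζ(s)·ζ(s-1)·⋯·ζ(s-n+1)`; in particular
`f_2(m) = σ₁(m) = ∑_{d ∣ m} d`. -/
theorem stmt19 (n : ℕ) (s : ℂ) (hs : (n : ℝ) < s.re) :
    (∑' m : ℕ, (fSub n (m + 1) : ℂ) / ((m + 1 : ℕ) : ℂ) ^ s) =
      ∏ k ∈ Finset.range n, riemannZeta (s - (k : ℂ)) ∧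
    (∀ m : ℕ, 0 < m → fSub 2 m = ∑ d ∈ m.divisors, d) := by
  obtain ⟨hS, hL⟩ := main_induction n s hs
  constructor
  · rw [← hL]
    have hdef : LSeries (Fc n) s = ∑' m : ℕ, LSeries.term (Fc n) s m := rfl
    rw [hdef, Summable.tsum_eq_zero_add hS, LSeries.term_zero, zero_add]
    refine tsum_congr fun m => ?_
    rw [LSeries.term_of_ne_zero (Nat.succ_ne_zero m)]
    simp [Fc]
  · intro m hm
    exact fSub_two_eq m hm.ne'
end
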